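/- arXiv:1911.13193 — 5 statements merged into one kernel-verified Lean document; each statement's English description precedes it below -/
import Mathlib

section
/- Let q be a prime power, let ℓ, u, v, ω be integers with 0 ≤ u ≤ ℓ, 0 ≤ v ≤ ℓ and 0 ≤ ω ≤ min{u,v}, and let U be a fixed u-dimensional F_q-subspace of F_q^ℓ. Then the number of v-dimensional F_q-subspaces V of F_q^ℓ with dim(U ∩ V) ≥ ω equals Σ_{i=ω}^{min{u,v}} [ℓ−u, v−i]_q · [u, i]_q · q^{(u−i)(v−i)}. -/
/-!
Double counting. An `i`-tuple `y` of independent vectors of `U` and a `(v - i)`-tuple `z` that is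
independent modulo `U` span a `v`-dimensional `V` with `U ⊓ V = span y`. Over a fixed such `V`,
the pairs `(y, z)` are the bases of `U ⊓ V` together with the `(v - i)`-tuples of `V` independent
modulo `U ⊓ V`, so all fibres have the same size. Counting `k`-tuples independent modulo a
`d`-dimensional subspace of `F_q^n` (`q^{dk} ∏_{j<k} (q^{n-d} - q^j)`) on both sides, the
products cancel against `[a, b]_q ∏_{j<b} (q^b - q^j) = ∏_{j<b} (q^a - q^j)`.
-/

/-- The Gaussian binomial coefficient `[a, b]_q`, defined as
`∏_{i=0}^{b-1} (q^{a-i} - 1)/(q^{b-i} - 1)` for `0 ≤ b ≤ a`, and `0` otherwise. -/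
noncomputable def gaussBinom (q : ℚ) (a b : ℤ) : ℚ :=
  if 0 ≤ b ∧ b ≤ a then
    ∏ i ∈ Finset.range b.toNat, (q ^ (a - i).toNat - 1) / (q ^ (b - i).toNat - 1)
  else 0

open Module Finset Submodule

theorem AddMonoidHom.natCard_preimage_of_surjective {M N : Type*} [AddGroup M] [AddGroup N]
    (f : M →+ N) (hf : Function.Surjective f) (t : Set N) :
    Nat.card (f ⁻¹' t) = Nat.card f.ker * Nat.card t := by
  let e := QuotientAddGroup.quotientKerEquivOfSurjective f hf
  have : f ⁻¹' t = QuotientAddGroup.mk ⁻¹' (e ⁻¹' t) := rfl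
  rw [this, Nat.card_congr (QuotientAddGroup.preimageMkEquivAddSubgroupProdSet _ _),
    Nat.card_prod, Nat.card_preimage_of_injective e.injective (by simp [e.surjective.range_eq])]

theorem Nat.card_eq_card_mul_of_card_fiber_eq {α β : Type*} [Finite α] [Finite β] (f : α → β)
    {c : ℕ} (hc : ∀ b, Nat.card {a // f a = b} = c) : Nat.card α = Nat.card β * c := by
  have := Fintype.ofFinite β
  rw [Nat.card_congr (Equiv.sigmaFiberEquiv f).symm, Nat.card_sigma,
    sum_congr rfl fun b _ => hc b, sum_const, Finset.card_univ, Nat.card_eq_fintype_card,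
    smul_eq_mul]

theorem Nat.card_subtype_and_mem_eq_sum {α ι : Type*} [Finite α] (p : α → Prop) (g : α → ι)
    (s : Finset ι) :
    Nat.card {a // p a ∧ g a ∈ s} = ∑ i ∈ s, Nat.card {a // p a ∧ g a = i} := by
  classical
  have := Fintype.ofFinite α
  simp only [Nat.card_eq_fintype_card, Fintype.card_subtype]
  rw [card_eq_sum_card_fiberwise (f := g) (t := s) fun a ha => (mem_filter.1 ha).2.2]
  simp only [filter_filter]
  exact sum_congr rfl fun i hi => congrArg _ (filter_congr fun a _ => by grind)

section LinearIndependent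

variable {F : Type*} [Field F] {M N : Type*} [AddCommGroup M] [Module F M] [AddCommGroup N]
  [Module F N]

theorem Submodule.natCard_forall_mem_and (V : Submodule F M) {k : ℕ}
    (P : (Fin k → M) → Prop) :
    Nat.card {s : Fin k → M // (∀ j, s j ∈ V) ∧ P s} =
      Nat.card {s : Fin k → V // P (V.subtype ∘ s)} :=
  Nat.card_congr
    { toFun s := ⟨fun j => ⟨s.1 j, s.2.1 j⟩, s.2.2⟩
      invFun s := ⟨V.subtype ∘ s.1, fun j => (s.1 j).2, s.2⟩
      left_inv _ := rfl
      right_inv _ := rfl }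

theorem LinearIndependent.disjoint_span_range_ker {ι : Type*} [Fintype ι] {f : M →ₗ[F] N}
    {v : ι → M} (hv : LinearIndependent F (f ∘ v)) :
    Disjoint (span F (Set.range v)) (LinearMap.ker f) := by
  have := FiniteDimensional.span_of_finite F (Set.finite_range v)
  refine disjoint_ker_of_finrank_le f ?_
  rw [map_span, ← Set.range_comp, finrank_span_eq_card hv]
  exact finrank_range_le_card v

variable [Fintype F] [Finite M]

theorem card_linearIndependent_fin (k : ℕ) :
    Nat.card {s : Fin k → M // LinearIndependent F s} =
      ∏ j ∈ range k, (Fintype.card F ^ finrank F M - Fintype.card F ^ j) := by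
  by_cases hk : k ≤ finrank F M
  · rw [card_linearIndependent hk, Fin.prod_univ_eq_prod_range (fun j => _ ^ _ - _ ^ j)]
  · rw [prod_eq_zero (mem_range.2 (not_le.1 hk)) (by rw [Nat.sub_self]), Nat.card_eq_zero]
    exact Or.inl ⟨fun s => hk (by simpa using s.2.fintype_card_le_finrank)⟩

theorem card_linearIndependent_comp (f : M →ₗ[F] N) (k : ℕ) :
    Nat.card {s : Fin k → M // LinearIndependent F (f ∘ s)} =
      Fintype.card F ^ (finrank F (LinearMap.ker f) * k) *
        ∏ j ∈ range k,
          (Fintype.card F ^ finrank F (LinearMap.range f) - Fintype.card F ^ j) := by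
  have : Finite (LinearMap.range f) := Module.finite_of_finite F
  let g : (Fin k → M) →+ (Fin k → LinearMap.range f) :=
    (f.rangeRestrict.compLeft (Fin k)).toAddMonoidHom
  have hg : Function.Surjective g := f.surjective_rangeRestrict.comp_left
  have hker : Nat.card g.ker = Nat.card (Fin k → LinearMap.ker f) := by
    refine Nat.card_congr ((Equiv.subtypeEquivRight fun s => ?_).trans Equiv.subtypePiEquivPi)
    simp [g, funext_iff, Subtype.ext_iff]
  have hLI (s : Fin k → M) : LinearIndependent F (f ∘ s) ↔ LinearIndependent F (g s) := by
    rw [← (LinearMap.range f).subtype.linearIndependent_iff_of_injOn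
      (Submodule.injective_subtype _).injOn]
    rfl
  calc Nat.card {s : Fin k → M // LinearIndependent F (f ∘ s)}
      = Nat.card (g ⁻¹' {w | LinearIndependent F w}) :=
        Nat.card_congr (Equiv.subtypeEquivRight hLI)
    _ = _ := by
      rw [g.natCard_preimage_of_surjective hg, hker, Nat.card_fun,
        natCard_eq_pow_finrank (K := F), Nat.card_fin, Nat.card_eq_fintype_card, ← pow_mul]
      exact congrArg _ (card_linearIndependent_fin k)

theorem card_linearIndependent_forall_mem (V : Submodule F M) (k : ℕ) :
    Nat.card {s : Fin k → M // (∀ j, s j ∈ V) ∧ LinearIndependent F s} =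
      ∏ j ∈ range k, (Fintype.card F ^ finrank F V - Fintype.card F ^ j) := by
  rw [V.natCard_forall_mem_and, ← card_linearIndependent_fin]
  exact Nat.card_congr (Equiv.subtypeEquivRight fun s =>
    V.subtype.linearIndependent_iff_of_injOn V.injective_subtype.injOn)

theorem card_linearIndependent_mkQ (U : Submodule F M) (k : ℕ) :
    Nat.card {s : Fin k → M // LinearIndependent F (U.mkQ ∘ s)} =
      Fintype.card F ^ (finrank F U * k) *
        ∏ j ∈ range k, (Fintype.card F ^ (finrank F M - finrank F U) - Fintype.card F ^ j) := by
  rw [card_linearIndependent_comp, U.ker_mkQ, U.range_mkQ, finrank_top, U.finrank_quotient]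

theorem card_linearIndependent_mkQ_forall_mem (U V : Submodule F M) (k : ℕ) :
    Nat.card {s : Fin k → M // (∀ j, s j ∈ V) ∧ LinearIndependent F (U.mkQ ∘ s)} =
      Fintype.card F ^ (finrank F ↥(U ⊓ V) * k) *
        ∏ j ∈ range k,
          (Fintype.card F ^ (finrank F V - finrank F ↥(U ⊓ V)) - Fintype.card F ^ j) := by
  have hker : finrank F (LinearMap.ker (U.mkQ ∘ₗ V.subtype)) = finrank F ↥(U ⊓ V) := by
    rw [LinearMap.ker_comp, U.ker_mkQ, ← V.finrank_map_subtype_eq, map_comap_subtype, inf_comm]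
  have hrange : finrank F (LinearMap.range (U.mkQ ∘ₗ V.subtype)) =
      finrank F V - finrank F ↥(U ⊓ V) := by
    have := (U.mkQ ∘ₗ V.subtype).finrank_range_add_finrank_ker
    omega
  simp_rw [V.natCard_forall_mem_and, ← Function.comp_assoc, ← LinearMap.coe_comp]
  rw [card_linearIndependent_comp, hker, hrange]

end LinearIndependent

section SpanSup

variable {F : Type*} [Field F] {M : Type*} [AddCommGroup M] [Module F M]
  (U : Submodule F M) {i m : ℕ} {y : Fin i → M} {z : Fin m → M}

theorem inf_span_sup_span_eq (hyU : ∀ j, y j ∈ U) (hz : LinearIndependent F (U.mkQ ∘ z)) :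
    U ⊓ (span F (Set.range y) ⊔ span F (Set.range z)) = span F (Set.range y) := by
  have hzU : Disjoint (span F (Set.range z)) U := by simpa using hz.disjoint_span_range_ker
  rw [inf_comm, sup_inf_assoc_of_le _ (span_le.2 (Set.range_subset_iff.2 hyU)), hzU.eq_bot,
    sup_bot_eq]

variable [FiniteDimensional F M]

theorem finrank_span_sup_span_eq (hyU : ∀ j, y j ∈ U) (hy : LinearIndependent F y)
    (hz : LinearIndependent F (U.mkQ ∘ z)) :
    finrank F ↥(span F (Set.range y) ⊔ span F (Set.range z)) = i + m := by
  have hzU : Disjoint (span F (Set.range z)) U := by simpa using hz.disjoint_span_range_ker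
  have hyz : span F (Set.range y) ⊓ span F (Set.range z) = ⊥ :=
    (hzU.mono_right (span_le.2 (Set.range_subset_iff.2 hyU))).symm.eq_bot
  have := finrank_sup_add_finrank_inf_eq (span F (Set.range y)) (span F (Set.range z))
  rwa [hyz, finrank_bot, add_zero, finrank_span_eq_card hy, finrank_span_eq_card hz.of_comp,
    Fintype.card_fin, Fintype.card_fin] at this

theorem span_sup_span_eq_iff (hyU : ∀ j, y j ∈ U) (hy : LinearIndependent F y)
    (hz : LinearIndependent F (U.mkQ ∘ z)) {V : Submodule F M} (hV : finrank F V = i + m) :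
    span F (Set.range y) ⊔ span F (Set.range z) = V ↔ (∀ j, y j ∈ V) ∧ ∀ j, z j ∈ V := by
  constructor
  · rintro rfl
    exact ⟨fun j => mem_sup_left (subset_span (Set.mem_range_self j)),
      fun j => mem_sup_right (subset_span (Set.mem_range_self j))⟩
  · rintro ⟨hyV, hzV⟩
    refine eq_of_le_of_finrank_eq (sup_le (span_le.2 (Set.range_subset_iff.2 hyV))
      (span_le.2 (Set.range_subset_iff.2 hzV))) ?_
    rw [finrank_span_sup_span_eq U hyU hy hz, hV]

end SpanSup

theorem Nat.cast_prod_range_pow_sub_pow {R : Type*} [CommRing R] {q : ℕ} (hq : 1 ≤ q)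
    (n k : ℕ) :
    ((∏ j ∈ range k, (q ^ n - q ^ j) : ℕ) : R) =
      ∏ j ∈ range k, ((q : R) ^ n - (q : R) ^ j) := by
  by_cases hk : k ≤ n
  · rw [Nat.cast_prod]
    refine prod_congr rfl fun j hj => ?_
    rw [Nat.cast_sub (Nat.pow_le_pow_right hq (by grind)), Nat.cast_pow, Nat.cast_pow]
  · have hn : n ∈ range k := mem_range.2 (by omega)
    rw [prod_eq_zero hn (by rw [Nat.sub_self]), prod_eq_zero hn (by rw [sub_self]), Nat.cast_zero]

theorem gaussBinom_mul_prod_pow_sub_pow {q : ℚ} (hq : 1 < q) (a b : ℕ) :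
    gaussBinom q a b * ∏ j ∈ range b, (q ^ b - q ^ j) = ∏ j ∈ range b, (q ^ a - q ^ j) := by
  by_cases hba : b ≤ a
  · rw [gaussBinom, if_pos ⟨Int.natCast_nonneg b, by exact_mod_cast hba⟩, Int.toNat_natCast,
      ← prod_mul_distrib]
    refine prod_congr rfl fun j hj => ?_
    have hjb : j < b := mem_range.1 hj
    have hsub (c : ℕ) (hjc : j ≤ c) : q ^ c - q ^ j = q ^ j * (q ^ (c - j) - 1) := by
      rw [mul_sub, ← pow_add, Nat.add_sub_cancel' hjc, mul_one]
    have hne : q ^ (b - j) - 1 ≠ 0 := (sub_pos.2 (one_lt_pow₀ hq (by omega))).ne'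
    rw [Int.toNat_sub, Int.toNat_sub, hsub b hjb.le, hsub a (by omega)]
    field_simp
  · have ha : a ∈ range b := mem_range.2 (by omega)
    rw [gaussBinom, if_neg (by omega), zero_mul, prod_eq_zero ha (by rw [sub_self])]

section Count

variable {F : Type*} [Field F] [Fintype F] {M : Type*} [AddCommGroup M] [Module F M] [Finite M]

theorem natCard_span_sup_span_eq (U V : Submodule F M) {i m : ℕ} (hV : finrank F V = i + m)
    (hUV : finrank F ↥(U ⊓ V) = i) :
    Nat.card {a : {y : Fin i → M // (∀ j, y j ∈ U) ∧ LinearIndependent F y} ×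
        {z : Fin m → M // LinearIndependent F (U.mkQ ∘ z)} //
          span F (Set.range a.1.1) ⊔ span F (Set.range a.2.1) = V} =
      (∏ j ∈ range i, (Fintype.card F ^ i - Fintype.card F ^ j)) *
        (Fintype.card F ^ (i * m) *
          ∏ j ∈ range m, (Fintype.card F ^ m - Fintype.card F ^ j)) := by
  calc _ = Nat.card ({y : Fin i → M // (∀ j, y j ∈ U ⊓ V) ∧ LinearIndependent F y} ×
        {z : Fin m → M // (∀ j, z j ∈ V) ∧ LinearIndependent F (U.mkQ ∘ z)}) :=
      Nat.card_congr <|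
        (Equiv.subtypeEquivRight fun a => span_sup_span_eq_iff U a.1.2.1 a.1.2.2 a.2.2 hV).trans <|
        (Equiv.subtypeProdEquivProd ..).trans <| Equiv.prodCongr
          ((Equiv.subtypeSubtypeEquivSubtypeInter
            (fun y : Fin i → M => (∀ j, y j ∈ U) ∧ LinearIndependent F y)
            (fun y => ∀ j, y j ∈ V)).trans
          (Equiv.subtypeEquivRight fun y => by simp only [Submodule.mem_inf, forall_and]; tauto))
          ((Equiv.subtypeSubtypeEquivSubtypeInter
            (fun z : Fin m → M => LinearIndependent F (U.mkQ ∘ z))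
            (fun z => ∀ j, z j ∈ V)).trans
          (Equiv.subtypeEquivRight fun _ => and_comm))
    _ = _ := by
      rw [Nat.card_prod, card_linearIndependent_forall_mem, card_linearIndependent_mkQ_forall_mem,
        hV, hUV, Nat.add_sub_cancel_left]

theorem natCard_finrank_inf_eq_mul (U : Submodule F M) {v i : ℕ} (hiv : i ≤ v) :
    Nat.card {V : Submodule F M // finrank F V = v ∧ finrank F ↥(U ⊓ V) = i} *
        ((∏ j ∈ range i, (Fintype.card F ^ i - Fintype.card F ^ j)) *
          (Fintype.card F ^ (i * (v - i)) *
            ∏ j ∈ range (v - i), (Fintype.card F ^ (v - i) - Fintype.card F ^ j))) =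
      (∏ j ∈ range i, (Fintype.card F ^ finrank F U - Fintype.card F ^ j)) *
        (Fintype.card F ^ (finrank F U * (v - i)) *
          ∏ j ∈ range (v - i),
            (Fintype.card F ^ (finrank F M - finrank F U) - Fintype.card F ^ j)) := by
  let Φ (a : {y : Fin i → M // (∀ j, y j ∈ U) ∧ LinearIndependent F y} ×
      {z : Fin (v - i) → M // LinearIndependent F (U.mkQ ∘ z)}) :
      {V : Submodule F M // finrank F V = v ∧ finrank F ↥(U ⊓ V) = i} := by
    refine ⟨span F (Set.range a.1.1) ⊔ span F (Set.range a.2.1), ?_, ?_⟩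
    · rw [finrank_span_sup_span_eq U a.1.2.1 a.1.2.2 a.2.2]
      omega
    · rw [inf_span_sup_span_eq U a.1.2.1 a.2.2, finrank_span_eq_card a.1.2.2, Fintype.card_fin]
  refine (Nat.card_eq_card_mul_of_card_fiber_eq Φ fun ⟨V, hV, hUV⟩ => ?_).symm.trans ?_
  · rw [← natCard_span_sup_span_eq U V (by omega) hUV]
    exact Nat.card_congr (Equiv.subtypeEquivRight fun a => Subtype.ext_iff)
  · rw [Nat.card_prod, card_linearIndependent_forall_mem, card_linearIndependent_mkQ]

theorem natCard_finrank_inf_eq (U : Submodule F M) {v i : ℕ} (hiu : i ≤ finrank F U)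
    (hiv : i ≤ v) :
    (Nat.card {V : Submodule F M // finrank F V = v ∧ finrank F ↥(U ⊓ V) = i} : ℚ) =
      gaussBinom (Fintype.card F) ((finrank F M : ℤ) - finrank F U) ((v : ℤ) - i) *
        gaussBinom (Fintype.card F) (finrank F U) i *
          (Fintype.card F : ℚ) ^ ((finrank F U - i) * (v - i)) := by
  set q := Fintype.card F
  set u := finrank F U
  have hq : (1 : ℚ) < q := by exact_mod_cast Fintype.one_lt_card
  have hP (b : ℕ) : ∏ j ∈ range b, ((q : ℚ) ^ b - q ^ j) ≠ 0 :=
    prod_ne_zero_iff.2 fun j hj => (sub_pos.2 (pow_lt_pow_right₀ hq (mem_range.1 hj))).ne'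
  have hcount := congrArg (Nat.cast : ℕ → ℚ) (natCard_finrank_inf_eq_mul U hiv)
  simp only [Nat.cast_mul, Nat.cast_pow, Nat.cast_prod_range_pow_sub_pow Fintype.card_pos]
    at hcount
  rw [← gaussBinom_mul_prod_pow_sub_pow hq u i,
    ← gaussBinom_mul_prod_pow_sub_pow hq (finrank F M - u) (v - i)] at hcount
  have hpow : (q : ℚ) ^ (u * (v - i)) = q ^ ((u - i) * (v - i)) * q ^ (i * (v - i)) := by
    rw [← pow_add, ← add_mul, Nat.sub_add_cancel hiu]
  rw [show (finrank F M : ℤ) - u = ((finrank F M - u : ℕ) : ℤ) by have := U.finrank_le; omega,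
    show (v : ℤ) - i = ((v - i : ℕ) : ℤ) by omega]
  refine mul_right_cancel₀ (mul_ne_zero (hP i) (mul_ne_zero (pow_ne_zero _ (by positivity))
    (hP (v - i)))) (hcount.trans ?_)
  rw [hpow]
  ring

end Count

theorem stmt0_general (q ℓ u v ω : ℕ) (F : Type) [Field F] [Fintype F]
    (hcard : Fintype.card F = q)
    (U : Submodule F (Fin ℓ → F)) (hU : Module.finrank F U = u) :
    (Nat.card {V : Submodule F (Fin ℓ → F) //
        Module.finrank F V = v ∧ ω ≤ Module.finrank F ↥(U ⊓ V)} : ℚ)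
      = ∑ i ∈ Finset.Icc ω (min u v),
          gaussBinom q ((ℓ : ℤ) - u) ((v : ℤ) - i) * gaussBinom q u i
            * (q : ℚ) ^ ((u - i) * (v - i)) := by
  subst hcard hU
  have hmem (V : Submodule F (Fin ℓ → F)) (hV : finrank F V = v) :
      ω ≤ finrank F ↥(U ⊓ V) ↔ finrank F ↥(U ⊓ V) ∈ Icc ω (min (finrank F U) v) := by
    rw [mem_Icc, le_min_iff, ← hV]
    exact ⟨fun h => ⟨h, finrank_mono inf_le_left, finrank_mono inf_le_right⟩, And.left⟩
  rw [Nat.card_congr (Equiv.subtypeEquivRight fun V => and_congr_right (hmem V)),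
    Nat.card_subtype_and_mem_eq_sum, Nat.cast_sum]
  refine sum_congr rfl fun i hi => ?_
  rw [mem_Icc, le_min_iff] at hi
  rw [natCard_finrank_inf_eq U hi.2.1 hi.2.2, finrank_fin_fun]

/-- The number of `v`-dimensional subspaces `V` of `F_q^ℓ` with `dim(U ∩ V) ≥ ω` equals
`Σ_{i=ω}^{min{u,v}} [ℓ−u, v−i]_q · [u, i]_q · q^{(u−i)(v−i)}`. -/
theorem stmt0 (q ℓ u v ω : ℕ) (F : Type) [Field F] [Fintype F]
    (hcard : Fintype.card F = q)
    (hu : u ≤ ℓ) (hv : v ≤ ℓ) (hω : ω ≤ min u v)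
    (U : Submodule F (Fin ℓ → F)) (hU : Module.finrank F U = u) :
    (Nat.card {V : Submodule F (Fin ℓ → F) //
        Module.finrank F V = v ∧ ω ≤ Module.finrank F ↥(U ⊓ V)} : ℚ)
      = ∑ i ∈ Finset.Icc ω (min u v),
          gaussBinom q ((ℓ : ℤ) - u) ((v : ℤ) - i) * gaussBinom q u i
            * (q : ℚ) ^ ((u - i) * (v - i)) :=
  stmt0_general q ℓ u v ω F hcard U hU
end

section
/- Let q be a prime power, let ℓ, u, v, ω be integers with 0 ≤ u ≤ ℓ, 0 ≤ v ≤ ℓ and 0 ≤ ω ≤ min{u,v}, and let U be a fixed u-dimensional F_q-subspace of F_q^ℓ. If V is chosen uniformly at random from the set of all v-dimensional F_q-subspaces of F_q^ℓ, then Pr[dim(U ∩ V) ≥ ω], i.e. the ratio (number of v-dimensional subspaces V with dim(U ∩ V) ≥ ω)/[ℓ, v]_q, is at most 16 · (min{u,v} + 1 − ω) · q^{(j* − v)(ℓ − u − j*)}, where j* := min{v − ω, (ℓ + v − u)/2} (a real number). -/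
/-!
Double counting. For each `V` with `dim V = v` and `dim (U ⊓ V) ≥ ω`, fix an `ω`-dimensional
`W ≤ U ⊓ V`. A basis of `W` followed by `v - ω` vectors of `V` independent modulo `W` is a basis
of `V`, so it determines `V`; hence these families, over all such `V`, are distinct elements of
`U^ω × (F_q^ℓ)^(v-ω)`. There are `|GL_ω| · |GL_(v-ω)| · q^(ω(v-ω))` of them for each `V`, and
`|GL_k| ≥ q^(k²)/4`, while `[ℓ, v]_q ≥ q^(v(ℓ-v))`. This gives the bound `16 q^(-ω(ℓ-u-v+ω))`,
which is the claimed one at `j = v - ω`; moving `j` towards the vertex `(ℓ+v-u)/2` of the concave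
exponent `(j - v)(ℓ - u - j)` only increases it, and `min{u,v} + 1 - ω ≥ 1`.
-/

open Module Submodule

theorem AddMonoidHom.card_preimage_of_surjective {A B : Type*} [AddGroup A] [AddGroup B]
    (φ : A →+ B) (hφ : Function.Surjective φ) (t : Set B) :
    Nat.card (φ ⁻¹' t) = Nat.card φ.ker * Nat.card t := by
  let e := QuotientAddGroup.quotientKerEquivOfSurjective φ hφ
  have hpre : φ ⁻¹' t = QuotientAddGroup.mk ⁻¹' (e ⁻¹' t) := rfl
  rw [hpre, Nat.card_congr (QuotientAddGroup.preimageMkEquivAddSubgroupProdSet _ _),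
    Nat.card_prod, Nat.card_preimage_of_injective e.injective (by simp [e.surjective.range_eq])]

theorem span_sumElim_eq_top_of_quotient {K V : Type*} [Field K] [AddCommGroup V] [Module K V]
    [FiniteDimensional K V] {W : Submodule K V} {ι₁ ι₂ : Type*} [Fintype ι₁] [Fintype ι₂]
    {g : ι₁ → W} (hg : LinearIndependent K g) {h : ι₂ → V}
    (hh : LinearIndependent K (W.mkQ ∘ h))
    (hcard : Fintype.card ι₁ + Fintype.card ι₂ = finrank K V) :
    span K (Set.range (Sum.elim (W.subtype ∘ g) h)) = ⊤ :=
  (hg.sumElim_of_quotient h hh).span_eq_top_of_card_eq_finrank' (by simpa using hcard)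

theorem Submodule.exists_le_finrank_eq {K V : Type*} [Field K] [AddCommGroup V] [Module K V]
    (P : Submodule K V) {k : ℕ} (hk : k ≤ finrank K P) : ∃ W ≤ P, finrank K W = k := by
  obtain ⟨f, hf⟩ := exists_linearIndependent_of_le_finrank hk
  refine ⟨span K (Set.range (P.subtype ∘ f)), span_le.2 ?_, ?_⟩
  · rintro _ ⟨i, rfl⟩
    exact (f i).2
  · rw [finrank_span_eq_card (hf.map' P.subtype P.ker_subtype), Fintype.card_fin]

theorem card_mul_le_card_of_le_card_fiber {X Y : Type*} [Finite X] [Finite Y] (f : X → Y)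
    (S : Set Y) {c : ℕ} (hc : ∀ y ∈ S, c ≤ Nat.card {x // f x = y}) :
    Nat.card S * c ≤ Nat.card X := by
  have := Fintype.ofFinite S
  have hinj : Function.Injective fun p : Σ y : S, {x // f x = y} ↦ p.2.1 := by
    rintro ⟨y, x, hx⟩ ⟨y', x', hx'⟩ (rfl : x = x')
    obtain rfl : y = y' := Subtype.ext (hx.symm.trans hx')
    rfl
  calc Nat.card S * c = ∑ _ : S, c := by simp [Nat.card_eq_fintype_card]
    _ ≤ ∑ y : S, Nat.card {x // f x = y} := Finset.sum_le_sum fun y _ ↦ hc y y.2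
    _ = Nat.card (Σ y : S, {x // f x = y}) := Nat.card_sigma.symm
    _ ≤ Nat.card X := Nat.card_le_card_of_injective _ hinj

section FiniteField

variable {K : Type*} [Field K] [Fintype K]

local notation "q" => Fintype.card K

theorem card_linearIndependent_comp_of_surjective {V V' : Type*} [AddCommGroup V] [Module K V]
    [AddCommGroup V'] [Module K V'] [Finite V] (φ : V →ₗ[K] V') (hφ : Function.Surjective φ)
    {m : ℕ} (hm : m ≤ finrank K V') :
    Nat.card {h : Fin m → V // LinearIndependent K (φ ∘ h)} =
      (∏ i : Fin m, (q ^ finrank K V' - q ^ (i : ℕ))) * Nat.card (LinearMap.ker φ) ^ m := by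
  have : Finite V' := Finite.of_surjective φ hφ
  let Φ := (LinearMap.compLeft φ (Fin m)).toAddMonoidHom
  have hker : Φ.ker ≃ (Fin m → LinearMap.ker φ) :=
    (Equiv.subtypeEquivRight fun _ ↦ by simp [Φ, funext_iff]).trans Equiv.subtypePiEquivPi
  have hpre := Φ.card_preimage_of_surjective hφ.comp_left {k | LinearIndependent K k}
  rw [Nat.card_congr hker, Nat.card_fun, Nat.card_fin] at hpre
  rw [← card_linearIndependent hm, mul_comm]
  exact hpre

variable {E : Type*} [AddCommGroup E] [Module K E]

def spanConcat (U : Submodule K E) {ω m : ℕ} (x : (Fin ω → U) × (Fin m → E)) :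
    Submodule K E :=
  span K (Set.range (Sum.elim (U.subtype ∘ x.1) x.2))

theorem le_card_spanConcat_eq [Finite E] (U V : Submodule K E) {ω m : ℕ}
    (hV : finrank K V = ω + m) (hUV : ω ≤ finrank K ↥(U ⊓ V)) :
    (∏ i : Fin ω, (q ^ ω - q ^ (i : ℕ))) * ((∏ i : Fin m, (q ^ m - q ^ (i : ℕ))) * q ^ (ω * m))
      ≤ Nat.card {x : (Fin ω → U) × (Fin m → E) // spanConcat U x = V} := by
  have hUV' : ω ≤ finrank K (U.comap V.subtype) := by
    rwa [(equivSubtypeMap V _).finrank_eq, map_comap_subtype, inf_comm]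
  obtain ⟨W, hWU, hW⟩ := (U.comap V.subtype).exists_le_finrank_eq hUV'
  have hquot : finrank K (V ⧸ W) = m := by
    have := W.finrank_quotient_add_finrank
    omega
  have hcardW : Nat.card W = q ^ ω := by
    have : Module.Finite K W := Module.Finite.of_finite
    rw [natCard_eq_pow_finrank (K := K), hW, Nat.card_eq_fintype_card]
  let ι : {g : Fin ω → W // LinearIndependent K g} ×
      {h : Fin m → V // LinearIndependent K (W.mkQ ∘ h)} → {x // spanConcat U x = V} :=
    fun gh ↦ ⟨(fun i ↦ ⟨gh.1.1 i, hWU (gh.1.1 i).2⟩, fun i ↦ gh.2.1 i), by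
      have htop := span_sumElim_eq_top_of_quotient gh.1.2 gh.2.2 (by simp [hV])
      calc spanConcat U _
          = map V.subtype (span K (Set.range (Sum.elim (W.subtype ∘ gh.1.1) gh.2.1))) := by
            rw [spanConcat, ← span_image, ← Set.range_comp, Sum.comp_elim]
            rfl
        _ = V := by rw [htop, map_subtype_top]⟩
  have hι : Function.Injective ι := by
    rintro ⟨⟨g, _⟩, ⟨h, _⟩⟩ ⟨⟨g', _⟩, ⟨h', _⟩⟩ heq
    have hfst := congr_fun (congrArg (fun x ↦ x.1.1) heq)
    have hsnd := congr_fun (congrArg (fun x ↦ x.1.2) heq)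
    ext i
    · simpa [ι] using congrArg Subtype.val (hfst i)
    · exact hsnd i
  calc _ = Nat.card ({g : Fin ω → W // LinearIndependent K g} ×
        {h : Fin m → V // LinearIndependent K (W.mkQ ∘ h)}) := by
        rw [Nat.card_prod, card_linearIndependent hW.ge,
          card_linearIndependent_comp_of_surjective W.mkQ W.mkQ_surjective hquot.ge, ker_mkQ,
          hcardW, hW, hquot, ← pow_mul, mul_comm ω]
    _ ≤ _ := Nat.card_le_card_of_injective ι hι

theorem card_finrank_inf_ge_mul_le [Finite E] (U : Submodule K E) (ω m : ℕ) :
    Nat.card {V : Submodule K E // finrank K V = ω + m ∧ ω ≤ finrank K ↥(U ⊓ V)} *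
        ((∏ i : Fin ω, (q ^ ω - q ^ (i : ℕ))) *
          ((∏ i : Fin m, (q ^ m - q ^ (i : ℕ))) * q ^ (ω * m))) ≤
      q ^ (finrank K U * ω) * q ^ (finrank K E * m) := by
  have : Module.Finite K E := Module.Finite.of_finite
  calc _ ≤ Nat.card ((Fin ω → U) × (Fin m → E)) :=
        card_mul_le_card_of_le_card_fiber (spanConcat U) {V | _ ∧ _}
          fun V hV ↦ le_card_spanConcat_eq U V hV.1 hV.2
    _ = _ := by
        rw [Nat.card_prod, Nat.card_fun, Nat.card_fun, natCard_eq_pow_finrank (K := K) (V := U),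
          natCard_eq_pow_finrank (K := K) (V := E), Nat.card_eq_fintype_card, Nat.card_fin,
          Nat.card_fin, ← pow_mul, ← pow_mul]

end FiniteField

theorem one_fourth_le_prod_one_sub_pow {x : ℝ} (hx₀ : 0 ≤ x) (hx : x ≤ 1 / 2) (k : ℕ) :
    1 / 4 ≤ ∏ j ∈ Finset.range k, (1 - x ^ (j + 1)) := by
  have key : ∀ k : ℕ, 1 / 4 + x ^ (k + 1) / 2 ≤ ∏ j ∈ Finset.range (k + 1), (1 - x ^ (j + 1)) := by
    intro k
    induction k with
    | zero => norm_num; linarith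
    | succ k ih =>
      rw [Finset.prod_range_succ]
      have hy : 0 ≤ x ^ (k + 1) := pow_nonneg hx₀ _
      have hxy : x ^ (k + 2) ≤ x ^ 2 := pow_le_pow_of_le_one hx₀ (by linarith) (by omega)
      have hsq : x ^ 2 ≤ 1 / 4 := by nlinarith
      rw [pow_succ x (k + 1)] at hxy ⊢
      nlinarith [mul_le_mul_of_nonneg_right ih (by nlinarith : 0 ≤ 1 - x ^ (k + 1) * x)]
  rcases k with _ | k
  · norm_num
  · linarith [key k, pow_nonneg hx₀ (k + 1)]

theorem pow_mul_self_le_four_mul_prod {q : ℕ} (hq : 2 ≤ q) (k : ℕ) :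
    q ^ (k * k) ≤ 4 * ∏ i : Fin k, (q ^ k - q ^ (i : ℕ)) := by
  have hq' : (2 : ℝ) ≤ q := by exact_mod_cast hq
  have hfactor : ∀ j ∈ Finset.range k,
      (q : ℝ) ^ k - (q : ℝ) ^ (k - 1 - j) = (q : ℝ) ^ k * (1 - (q : ℝ)⁻¹ ^ (j + 1)) := by
    intro j hj
    have hpow : (q : ℝ) ^ k = q ^ (k - 1 - j) * q ^ (j + 1) := by
      rw [← pow_add]
      congr 1
      have := Finset.mem_range.1 hj
      omega
    rw [hpow, mul_sub, mul_one, inv_pow, mul_inv_cancel_right₀ (by positivity)]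
  have hprod := one_fourth_le_prod_one_sub_pow (x := (q : ℝ)⁻¹) (by positivity)
    (by rw [inv_le_comm₀ (by positivity) (by norm_num)]; linarith) k
  have hcast : ∀ i ∈ Finset.range k, ((q ^ k - q ^ i : ℕ) : ℝ) = (q : ℝ) ^ k - (q : ℝ) ^ i :=
    fun i hi ↦ by
      rw [Nat.cast_sub (Nat.pow_le_pow_right (by omega : 0 < q) (Finset.mem_range.1 hi).le),
        Nat.cast_pow, Nat.cast_pow]
  rw [← Nat.cast_le (α := ℝ), Fin.prod_univ_eq_prod_range (fun i ↦ q ^ k - q ^ i), Nat.cast_mul,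
    Nat.cast_prod, Finset.prod_congr rfl hcast, ← Finset.prod_range_reflect,
    Finset.prod_congr rfl hfactor, Finset.prod_mul_distrib, Finset.prod_const, Finset.card_range,
    ← pow_mul]
  push_cast
  nlinarith [pow_pos (by positivity : (0 : ℝ) < q) (k * k)]

theorem pow_le_gaussBinom {q : ℚ} (hq : 1 < q) {ℓ v : ℕ} (hv : v ≤ ℓ) :
    q ^ (v * (ℓ - v)) ≤ gaussBinom q ℓ v := by
  rw [gaussBinom, if_pos ⟨by positivity, by exact_mod_cast hv⟩, Int.toNat_natCast]
  calc q ^ (v * (ℓ - v)) = ∏ _i ∈ Finset.range v, q ^ (ℓ - v) := by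
        rw [Finset.prod_const, Finset.card_range, ← pow_mul, mul_comm]
    _ ≤ _ := Finset.prod_le_prod (fun _ _ ↦ by positivity) fun i hi ↦ ?_
  have hiv := Finset.mem_range.1 hi
  rw [show ((ℓ : ℤ) - i).toNat = ℓ - v + (v - i) by omega,
    show ((v : ℤ) - i).toNat = v - i by omega,
    le_div_iff₀ (by linarith [one_lt_pow₀ hq (by omega : v - i ≠ 0)]), pow_add]
  nlinarith [one_le_pow₀ (M₀ := ℚ) hq.le (n := ℓ - v)]

theorem sub_mul_sub_le_min_midpoint (a s t : ℝ) :
    (a - s) * (t - a) ≤ (min a ((s + t) / 2) - s) * (t - min a ((s + t) / 2)) := by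
  rcases le_total a ((s + t) / 2) with h | h
  · rw [min_eq_left h]
  · rw [min_eq_right h]
    nlinarith [sq_nonneg (a - (s + t) / 2)]

theorem card_div_gaussBinom_le {F : Type*} [Field F] [Fintype F] {ℓ v ω : ℕ} (hv : v ≤ ℓ)
    (hωv : ω ≤ v) (U : Submodule F (Fin ℓ → F)) :
    (Nat.card {V : Submodule F (Fin ℓ → F) // finrank F V = v ∧ ω ≤ finrank F ↥(U ⊓ V)} : ℝ)
        / ((gaussBinom (Fintype.card F) ℓ v : ℚ) : ℝ)
      ≤ 16 * (Fintype.card F : ℝ) ^ (((v : ℝ) - ω - v) * (ℓ - finrank F U - (v - ω))) := by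
  obtain ⟨m, rfl⟩ := Nat.exists_eq_add_of_le hωv
  set q := Fintype.card F
  set N := Nat.card {V : Submodule F (Fin ℓ → F) // finrank F V = ω + m ∧ ω ≤ finrank F ↥(U ⊓ V)}
  have hq : 2 ≤ q := Fintype.one_lt_card
  have hN : N * q ^ (ω * ω + m * m + ω * m) ≤ 16 * q ^ (finrank F U * ω + ℓ * m) := by
    have hcount := card_finrank_inf_ge_mul_le U ω m
    rw [finrank_fin_fun] at hcount
    calc N * q ^ (ω * ω + m * m + ω * m)
        = N * (q ^ (ω * ω) * (q ^ (m * m) * q ^ (ω * m))) := by ring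
      _ ≤ N * ((4 * ∏ i : Fin ω, (q ^ ω - q ^ (i : ℕ))) *
            ((4 * ∏ i : Fin m, (q ^ m - q ^ (i : ℕ))) * q ^ (ω * m))) := by
          gcongr <;> exact pow_mul_self_le_four_mul_prod hq _
      _ = 16 * (N * ((∏ i : Fin ω, (q ^ ω - q ^ (i : ℕ))) *
            ((∏ i : Fin m, (q ^ m - q ^ (i : ℕ))) * q ^ (ω * m)))) := by ring
      _ ≤ _ := by rw [pow_add]; exact Nat.mul_le_mul_left 16 hcount
  have hG : (q : ℝ) ^ ((ω + m) * (ℓ - (ω + m))) ≤ ((gaussBinom q ℓ ↑(ω + m) : ℚ) : ℝ) := by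
    exact_mod_cast pow_le_gaussBinom (q := q) (by exact_mod_cast hq) hv
  have hq₀ : (0 : ℝ) < q := by positivity
  have hexp : (q : ℝ) ^ (((↑(ω + m) : ℝ) - ω - ↑(ω + m)) * (ℓ - finrank F U - (↑(ω + m) - ω))) =
      (q : ℝ) ^ (finrank F U * ω + ℓ * m) /
        ((q : ℝ) ^ (ω * ω + m * m + ω * m) * (q : ℝ) ^ ((ω + m) * (ℓ - (ω + m)))) := by
    rw [← pow_add, ← Real.rpow_natCast, ← Real.rpow_natCast, ← Real.rpow_sub hq₀]
    congr 1
    push_cast [Nat.cast_sub hv]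
    ring
  rw [hexp, ← mul_div_assoc]
  calc (N : ℝ) / ((gaussBinom q ℓ ↑(ω + m) : ℚ) : ℝ)
      ≤ N / (q : ℝ) ^ ((ω + m) * (ℓ - (ω + m))) := by gcongr
    _ = N * (q : ℝ) ^ (ω * ω + m * m + ω * m) /
          ((q : ℝ) ^ (ω * ω + m * m + ω * m) * (q : ℝ) ^ ((ω + m) * (ℓ - (ω + m)))) := by
        rw [mul_comm (N : ℝ), mul_div_mul_left _ _ (by positivity)]
    _ ≤ _ := div_le_div_of_nonneg_right (by exact_mod_cast hN) (by positivity)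

open Real in
theorem stmt2_general (q ℓ u v ω : ℕ) (F : Type) [Field F] [Fintype F]
    (hcard : Fintype.card F = q)
    (hv : v ≤ ℓ) (hω : ω ≤ min u v)
    (U : Submodule F (Fin ℓ → F)) (hU : Module.finrank F U = u) :
    (Nat.card {V : Submodule F (Fin ℓ → F) //
        Module.finrank F V = v ∧ ω ≤ Module.finrank F ↥(U ⊓ V)} : ℝ)
        / ((gaussBinom q ℓ v : ℚ) : ℝ)
      ≤ 16 * ((min u v : ℝ) + 1 - ω)
          * (q : ℝ) ^ ((min ((v : ℝ) - ω) (((ℓ : ℝ) + v - u) / 2) - v)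
              * ((ℓ : ℝ) - u - min ((v : ℝ) - ω) (((ℓ : ℝ) + v - u) / 2))) := by
  subst hcard hU
  have hωv : ω ≤ v := hω.trans (min_le_right _ _)
  have hvertex := sub_mul_sub_le_min_midpoint ((v : ℝ) - ω) v (ℓ - finrank F U)
  rw [show ((v : ℝ) + (ℓ - finrank F U)) / 2 = (ℓ + v - finrank F U) / 2 by ring] at hvertex
  have hfactor : (1 : ℝ) ≤ (min (finrank F U) v : ℕ) + 1 - ω := by
    have : (ω : ℝ) ≤ (min (finrank F U) v : ℕ) := by exact_mod_cast hω
    linarith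
  push_cast at hfactor
  calc _ ≤ 16 * (Fintype.card F : ℝ) ^ (((v : ℝ) - ω - v) * (ℓ - finrank F U - (v - ω))) :=
        card_div_gaussBinom_le hv hωv U
    _ ≤ 16 * (Fintype.card F : ℝ) ^ ((min ((v : ℝ) - ω) ((ℓ + v - finrank F U) / 2) - v) *
          (ℓ - finrank F U - min ((v : ℝ) - ω) ((ℓ + v - finrank F U) / 2))) :=
        mul_le_mul_of_nonneg_left (Real.rpow_le_rpow_of_exponent_le
          (by exact_mod_cast Fintype.one_lt_card.le) hvertex) (by norm_num)
    _ ≤ _ := by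
        rw [mul_assoc]
        exact mul_le_mul_of_nonneg_left (le_mul_of_one_le_left (by positivity) hfactor)
          (by norm_num)

open Real in
/-- For a fixed `u`-dimensional subspace `U` of `F_q^ℓ` and a uniformly random
`v`-dimensional subspace `V`, the probability that `dim(U ∩ V) ≥ ω`, i.e. the ratio
(number of `v`-dim subspaces `V` with `dim(U ∩ V) ≥ ω`) / `[ℓ, v]_q`, is at most
`16 (min{u,v} + 1 − ω) q^{(j* − v)(ℓ − u − j*)}` where `j* = min{v − ω, (ℓ + v − u)/2}`. -/
theorem stmt2 (q ℓ u v ω : ℕ) (F : Type) [Field F] [Fintype F]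
    (hcard : Fintype.card F = q)
    (hu : u ≤ ℓ) (hv : v ≤ ℓ) (hω : ω ≤ min u v)
    (U : Submodule F (Fin ℓ → F)) (hU : Module.finrank F U = u) :
    (Nat.card {V : Submodule F (Fin ℓ → F) //
        Module.finrank F V = v ∧ ω ≤ Module.finrank F ↥(U ⊓ V)} : ℝ)
        / ((gaussBinom q ℓ v : ℚ) : ℝ)
      ≤ 16 * ((min u v : ℝ) + 1 - ω)
          * (q : ℝ) ^ ((min ((v : ℝ) - ω) (((ℓ : ℝ) + v - u) / 2) - v)
              * ((ℓ : ℝ) - u - min ((v : ℝ) - ω) (((ℓ : ℝ) + v - u) / 2))) :=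
  stmt2_general q ℓ u v ω F hcard hv hω U hU
end

section
/- Let q ≥ 2 be an integer and let a, b be integers with 0 ≤ b ≤ a. Then q^{b(a−b)} ≤ [a, b]_q < 4 · q^{b(a−b)}. -/
open Finset

theorem gaussBinom_add_eq_prod (q : ℚ) (b d : ℕ) :
    gaussBinom q (b + d : ℕ) b = ∏ j ∈ range b, (q ^ (j + 1 + d) - 1) / (q ^ (j + 1) - 1) := by
  rw [gaussBinom, if_pos ⟨Int.natCast_nonneg b, by omega⟩, Int.toNat_natCast,
    ← prod_range_reflect]
  refine prod_congr rfl fun j hj => ?_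
  have hj : j < b := mem_range.mp hj
  congr 3 <;> omega

section

variable {K : Type*} [Field K]

theorem pow_sub_one_eq_mul_one_sub_inv_pow {q : K} (hq : q ≠ 0) (n : ℕ) :
    q ^ n - 1 = q ^ n * (1 - q⁻¹ ^ n) := by
  rw [mul_sub, mul_one, ← mul_pow, mul_inv_cancel₀ hq, one_pow]

theorem pow_add_sub_one_div_pow_sub_one {q : K} (hq : q ≠ 0) (m d : ℕ) :
    (q ^ (m + d) - 1) / (q ^ m - 1) = q ^ d * ((1 - q⁻¹ ^ (m + d)) / (1 - q⁻¹ ^ m)) := by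
  rw [pow_sub_one_eq_mul_one_sub_inv_pow hq, pow_sub_one_eq_mul_one_sub_inv_pow hq,
    mul_div_mul_comm, pow_add, mul_div_cancel_left₀ _ (pow_ne_zero m hq)]

variable [LinearOrder K] [IsStrictOrderedRing K]

theorem quarter_add_pow_le_prod_one_sub_pow {x : K} (hx₀ : 0 ≤ x) (hx : x ≤ 1 / 2) (b : ℕ) :
    1 / 4 + x ^ (b + 2) ≤ ∏ j ∈ range (b + 1), (1 - x ^ (j + 1)) := by
  induction b with
  | zero => rw [prod_range_one]; nlinarith
  | succ b ih =>
    rw [prod_range_succ, show b + 1 + 2 = b + 2 + 1 by ring, pow_succ]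
    set y := x ^ (b + 2)
    have hy : y ≤ x ^ 2 := pow_le_pow_of_le_one hx₀ (by linarith) (by omega)
    have hy₀ : 0 ≤ y := pow_nonneg hx₀ _
    -- `(1/4 + y) (1 - y) - (1/4 + y x) = y (3/4 - y - x)`, and `y ≤ x² ≤ 1/4`, `x ≤ 1/2`
    nlinarith [mul_le_mul_of_nonneg_right ih (by nlinarith : (0 : K) ≤ 1 - y),
      mul_nonneg hy₀ (by nlinarith : (0 : K) ≤ 3 / 4 - y - x)]

theorem quarter_lt_prod_one_sub_pow {x : K} (hx₀ : 0 < x) (hx : x ≤ 1 / 2) (b : ℕ) :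
    1 / 4 < ∏ j ∈ range b, (1 - x ^ (j + 1)) := by
  cases b with
  | zero => norm_num
  | succ b =>
    have := quarter_add_pow_le_prod_one_sub_pow hx₀.le hx b
    have := pow_pos hx₀ (b + 2)
    linarith

theorem prod_one_sub_pow_le_prod_one_sub_pow_add {x : K} (hx₀ : 0 ≤ x) (hx₁ : x ≤ 1) (b d : ℕ) :
    ∏ j ∈ range b, (1 - x ^ (j + 1)) ≤ ∏ j ∈ range b, (1 - x ^ (j + 1 + d)) :=
  prod_le_prod (fun _ _ => sub_nonneg.mpr (pow_le_one₀ hx₀ hx₁))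
    (fun _ _ => sub_le_sub_left (pow_le_pow_of_le_one hx₀ hx₁ (Nat.le_add_right _ _)) 1)

theorem prod_one_sub_pow_le_one {x : K} (hx₀ : 0 ≤ x) (hx₁ : x ≤ 1) (b d : ℕ) :
    ∏ j ∈ range b, (1 - x ^ (j + 1 + d)) ≤ 1 :=
  prod_le_one (fun _ _ => sub_nonneg.mpr (pow_le_one₀ hx₀ hx₁))
    (fun _ _ => sub_le_self 1 (pow_nonneg hx₀ _))

theorem one_le_prod_div_prod_one_sub_pow {x : K} (hx₀ : 0 < x) (hx : x ≤ 1 / 2) (b d : ℕ) :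
    1 ≤ (∏ j ∈ range b, (1 - x ^ (j + 1 + d))) / ∏ j ∈ range b, (1 - x ^ (j + 1)) :=
  (one_le_div (by linarith [quarter_lt_prod_one_sub_pow hx₀ hx b])).mpr
    (prod_one_sub_pow_le_prod_one_sub_pow_add hx₀.le (by linarith) b d)

theorem prod_div_prod_one_sub_pow_lt_four {x : K} (hx₀ : 0 < x) (hx : x ≤ 1 / 2) (b d : ℕ) :
    (∏ j ∈ range b, (1 - x ^ (j + 1 + d))) / ∏ j ∈ range b, (1 - x ^ (j + 1)) < 4 := by
  have hD := quarter_lt_prod_one_sub_pow hx₀ hx b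
  rw [div_lt_iff₀ (by linarith)]
  linarith [prod_one_sub_pow_le_one hx₀.le (by linarith) b d]

end

theorem gaussBinom_add_eq_pow_mul (q : ℚ) (hq : q ≠ 0) (b d : ℕ) :
    gaussBinom q (b + d : ℕ) b = q ^ (b * d) *
      ((∏ j ∈ range b, (1 - q⁻¹ ^ (j + 1 + d))) / ∏ j ∈ range b, (1 - q⁻¹ ^ (j + 1))) := by
  simp_rw [gaussBinom_add_eq_prod, pow_add_sub_one_div_pow_sub_one hq, prod_mul_distrib,
    prod_const, card_range, ← pow_mul', prod_div_distrib]

/-- For an integer `q ≥ 2` and integers `0 ≤ b ≤ a`: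
`q^{b(a−b)} ≤ [a, b]_q < 4 q^{b(a−b)}`. -/
theorem stmt3 (q a b : ℕ) (hq : 2 ≤ q) (hb : b ≤ a) :
    (q : ℚ) ^ (b * (a - b)) ≤ gaussBinom q a b ∧
      gaussBinom q a b < 4 * (q : ℚ) ^ (b * (a - b)) := by
  obtain ⟨d, rfl⟩ := Nat.exists_eq_add_of_le hb
  have hq₀ : (0 : ℚ) < q := by exact_mod_cast (by omega : 0 < q)
  have hx : (q : ℚ)⁻¹ ≤ 1 / 2 := by
    rw [one_div]; exact inv_anti₀ two_pos (by exact_mod_cast hq)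
  have hx₀ : (0 : ℚ) < (q : ℚ)⁻¹ := inv_pos.mpr hq₀
  rw [Nat.add_sub_cancel_left, gaussBinom_add_eq_pow_mul _ hq₀.ne' b d]
  have hP : (0 : ℚ) < q ^ (b * d) := pow_pos hq₀ _
  constructor
  · exact le_mul_of_one_le_right hP.le (one_le_prod_div_prod_one_sub_pow hx₀ hx b d)
  · rw [mul_comm 4]
    exact mul_lt_mul_of_pos_left (prod_div_prod_one_sub_pow_lt_four hx₀ hx b d) hP
end

section
/- Let q ≥ 2 be an integer, let n, k, δ, j be integers with 0 ≤ k ≤ n, 0 ≤ j ≤ n, 0 ≤ δ ≤ n and 2j + δ > n − k, and let E be a fixed j-dimensional F_q-subspace of F_q^n. If V is chosen uniformly at random from the set of all δ-dimensional F_q-subspaces of F_q^n, then Pr[dim(E ∩ V) ≥ ⌈j − (n−k)/2 + δ/2⌉], which equals (Σ_{i=⌈j − (n−k)/2 + δ/2⌉}^{min{δ, j}} [n−j, δ−i]_q · [j, i]_q · q^{(j−i)(δ−i)}) / [n, δ]_q, is at most 16 n · q^{−⌈δ/2 + j − (n−k)/2⌉ · ((n+k)/2 − ⌈δ/2⌉)}.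 -/
open Finset Module Submodule

theorem quarter_le_prod_one_sub_pow {x : ℚ} (hx₀ : 0 ≤ x) (hx : x ≤ 1 / 2) (d : ℕ) :
    1 / 4 ≤ ∏ l ∈ range d, (1 - x ^ (l + 1)) := by
  -- `1/4` alone is not inductive; the surplus `x^(d+1)/2` pays for the next factor.
  have key : ∀ d, 1 / 4 + x ^ (d + 1) / 2 ≤ ∏ l ∈ range (d + 1), (1 - x ^ (l + 1)) := by
    intro d
    induction d with
    | zero => simp; linarith
    | succ d ih =>
      have hu₀ : 0 ≤ x ^ (d + 1) := pow_nonneg hx₀ _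
      have hu : x ^ (d + 1) ≤ 1 / 2 := (pow_le_of_le_one hx₀ (by linarith) d.succ_ne_zero).trans hx
      have hv : 0 ≤ 1 - x ^ (d + 2) := by nlinarith [pow_succ x (d + 1)]
      have hgain : 0 ≤ x ^ (d + 1) * (1 / 2 - 3 * x / 4 - x ^ (d + 1) * x / 2) :=
        mul_nonneg hu₀ (by nlinarith)
      rw [prod_range_succ]
      nlinarith [mul_le_mul_of_nonneg_right ih hv, pow_succ x (d + 1)]
  cases d with
  | zero => norm_num
  | succ d => linarith [key d, pow_nonneg hx₀ (d + 1)]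

namespace gaussBinom

variable {q : ℚ}

theorem of_lt {a b : ℤ} (h : a < b) : gaussBinom q a b = 0 :=
  if_neg fun h' => h.not_ge h'.2

theorem eq_prod_range {m d : ℕ} (hd : d ≤ m) :
    gaussBinom q m d = ∏ i ∈ range d, (q ^ (m - i) - 1) / (q ^ (d - i) - 1) := by
  rw [gaussBinom, if_pos ⟨d.cast_nonneg, by exact_mod_cast hd⟩, Int.toNat_natCast]
  refine prod_congr rfl fun i hi => ?_
  have hi : i < d := mem_range.1 hi
  rw [show ((m : ℤ) - i).toNat = m - i by omega, show ((d : ℤ) - i).toNat = d - i by omega]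

theorem add_eq_prod_range (a d : ℕ) :
    gaussBinom q ((a + d : ℕ) : ℤ) d
      = ∏ l ∈ range d, (q ^ (a + l + 1) - 1) / (q ^ (l + 1) - 1) := by
  rw [eq_prod_range (Nat.le_add_left d a), ← prod_range_reflect]
  refine prod_congr rfl fun l hl => ?_
  have hl : l < d := mem_range.1 hl
  rw [show a + d - (d - 1 - l) = a + l + 1 by omega, show d - (d - 1 - l) = l + 1 by omega]

theorem eq_prod_div_prod (hq : q ≠ 0) {m d : ℕ} (hd : d ≤ m) :
    gaussBinom q m d = (∏ i ∈ range d, (q ^ m - q ^ i)) / ∏ i ∈ range d, (q ^ d - q ^ i) := by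
  rw [eq_prod_range hd, ← prod_div_distrib]
  refine prod_congr rfl fun i hi => ?_
  have hi : i < d := mem_range.1 hi
  have factor : ∀ n, i ≤ n → q ^ n - q ^ i = q ^ i * (q ^ (n - i) - 1) := fun n hn => by
    rw [mul_sub, mul_one, ← pow_add, Nat.add_sub_cancel' hn]
  rw [factor m (by omega), factor d hi.le, mul_div_mul_left _ _ (pow_ne_zero i hq)]

theorem nonneg (hq : 1 ≤ q) (a b : ℤ) : 0 ≤ gaussBinom q a b := by
  unfold gaussBinom
  split_ifs
  · exact prod_nonneg fun i _ => div_nonneg (sub_nonneg.2 (one_le_pow₀ hq))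
      (sub_nonneg.2 (one_le_pow₀ hq))
  · exact le_rfl

theorem pow_le (hq : 1 < q) {m d : ℕ} (hd : d ≤ m) : q ^ (d * (m - d)) ≤ gaussBinom q m d := by
  obtain ⟨a, rfl⟩ := Nat.exists_eq_add_of_le' hd
  rw [add_eq_prod_range, Nat.add_sub_cancel, mul_comm, pow_mul,
    show (q ^ a) ^ d = ∏ _l ∈ range d, q ^ a by rw [prod_const, card_range]]
  refine prod_le_prod (fun _ _ => by positivity) fun l _ => ?_
  have hden : 0 < q ^ (l + 1) - 1 := sub_pos.2 (one_lt_pow₀ hq l.succ_ne_zero)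
  rw [le_div_iff₀ hden, mul_sub, mul_one, ← pow_add, ← add_assoc]
  linarith [one_le_pow₀ (n := a) hq.le]

theorem pos (hq : 1 < q) {m d : ℕ} (hd : d ≤ m) : 0 < gaussBinom q m d :=
  (pow_pos (zero_lt_one.trans hq) _).trans_le (pow_le hq hd)

theorem le_four_mul_pow (hq : 2 ≤ q) {m d : ℕ} (hd : d ≤ m) :
    gaussBinom q m d ≤ 4 * q ^ (d * (m - d)) := by
  obtain ⟨a, rfl⟩ := Nat.exists_eq_add_of_le' hd
  have hq₁ : 1 < q := by linarith
  have hq₀ : 0 < q := by linarith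
  have hP := quarter_le_prod_one_sub_pow (x := q⁻¹) (by positivity)
    (by rw [inv_le_comm₀ hq₀ (by norm_num)]; linarith) d
  have hP₀ : 0 < ∏ l ∈ range d, (1 - q⁻¹ ^ (l + 1)) := by linarith
  calc gaussBinom q ((a + d : ℕ) : ℤ) d
      ≤ ∏ l ∈ range d, q ^ a / (1 - q⁻¹ ^ (l + 1)) := by
        rw [add_eq_prod_range]
        refine prod_le_prod (fun l _ => div_nonneg (sub_nonneg.2 (one_le_pow₀ hq₁.le))
          (sub_nonneg.2 (one_le_pow₀ hq₁.le))) fun l _ => ?_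
        have hl : 1 < q ^ (l + 1) := one_lt_pow₀ hq₁ l.succ_ne_zero
        calc (q ^ (a + l + 1) - 1) / (q ^ (l + 1) - 1)
            ≤ q ^ (a + l + 1) / (q ^ (l + 1) - 1) := by gcongr; linarith
          _ = q ^ a / (1 - q⁻¹ ^ (l + 1)) := by
            rw [inv_pow, ← one_div, one_sub_div (pow_ne_zero _ hq₀.ne'), div_div_eq_mul_div,
              ← pow_add, add_assoc]
    _ = q ^ (d * a) / ∏ l ∈ range d, (1 - q⁻¹ ^ (l + 1)) := by
        rw [prod_div_distrib, prod_const, card_range, ← pow_mul, mul_comm]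
    _ ≤ q ^ (d * a) / (1 / 4) := div_le_div_of_nonneg_left (by positivity) (by norm_num) hP
    _ = 4 * q ^ (d * (a + d - d)) := by rw [Nat.add_sub_cancel]; ring

theorem mul_pow_mul_gaussBinom_mul_pow_le (hq : 2 ≤ q) {m e δ i : ℕ} (hie : i ≤ e) (hiδ : i ≤ δ)
    (hcodim : δ - i ≤ m - e) (he : e ≤ m) :
    gaussBinom q e i * q ^ ((e - i) * (δ - i)) * gaussBinom q (m - e : ℕ) (δ - i : ℕ)
        * q ^ (i * (m - e - (δ - i))) ≤ 16 * gaussBinom q m δ := by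
  have hq₁ : 1 ≤ q := by linarith
  have hδ : δ ≤ m := by omega
  have hexp : i * (e - i) + (e - i) * (δ - i) + (δ - i) * (m - e - (δ - i))
      + i * (m - e - (δ - i)) = δ * (m - δ) := by
    zify [hie, hiδ, he, hcodim, hδ]
    ring
  calc gaussBinom q e i * q ^ ((e - i) * (δ - i)) * gaussBinom q (m - e : ℕ) (δ - i : ℕ)
        * q ^ (i * (m - e - (δ - i)))
      ≤ 4 * q ^ (i * (e - i)) * q ^ ((e - i) * (δ - i))
          * (4 * q ^ ((δ - i) * (m - e - (δ - i)))) * q ^ (i * (m - e - (δ - i))) := by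
        have := nonneg hq₁ (m - e : ℕ) (δ - i : ℕ)
        gcongr
        · exact le_four_mul_pow hq hie
        · exact le_four_mul_pow hq hcodim
    _ = 16 * q ^ (δ * (m - δ)) := by
        rw [← hexp, pow_add, pow_add, pow_add]
        ring
    _ ≤ 16 * gaussBinom q m δ := by
        gcongr
        exact pow_le (by linarith) hδ

end gaussBinom

theorem Nat.card_subtype_eq_sum_card_fiber {α β : Type*} [Finite α] [DecidableEq β]
    {P : α → Prop} (f : α → β) (s : Finset β) (hf : ∀ a, P a → f a ∈ s) :
    Nat.card {a // P a} = ∑ b ∈ s, Nat.card {a // P a ∧ f a = b} := by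
  classical
  have := Fintype.ofFinite α
  simp only [Nat.card_eq_fintype_card, Fintype.card_subtype, ← filter_filter]
  exact card_eq_sum_card_fiberwise fun a ha => hf a (mem_filter.1 ha).2

theorem Nat.card_subtype_eq_mul_of_card_fiber {α β R : Type*} [Finite α] [Finite β]
    [CommSemiring R] {P : α → Prop} {Q : β → Prop} (f : α → β) (hf : ∀ a, P a → Q (f a)) {c : R}
    (hc : ∀ b, Q b → (Nat.card {a // P a ∧ f a = b} : R) = c) :
    (Nat.card {a // P a} : R) = Nat.card {b // Q b} * c := by
  classical
  have := Fintype.ofFinite β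
  rw [Nat.card_subtype_eq_sum_card_fiber f {b | Q b} fun a ha => mem_filter.2 ⟨mem_univ _, hf a ha⟩,
    Nat.cast_sum, sum_congr rfl fun b hb => hc b (mem_filter.1 hb).2, sum_const, nsmul_eq_mul,
    Nat.card_eq_fintype_card, Fintype.card_subtype]

theorem Finset.sum_Icc_intCast_eq_sum_Icc_toNat {M : Type*} [AddCommMonoid M] {t : ℤ} (ht : 0 ≤ t)
    (b : ℕ) (f : ℤ → M) : ∑ i ∈ Icc t (b : ℤ), f i = ∑ i ∈ Icc t.toNat b, f i := by
  refine sum_nbij' Int.toNat (↑) (fun i hi => ?_) (fun i hi => ?_) (fun i hi => ?_)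
    (fun i hi => ?_) fun i hi => ?_ <;> simp only [mem_Icc] at hi ⊢ <;> try omega
  rw [Int.toNat_of_nonneg (by omega)]

namespace Submodule

variable {R M : Type*} [Ring R] [AddCommGroup M] [Module R M]

theorem card_subtype_map_subtype (Y : Submodule R M) {P : Submodule R M → Prop}
    (hP : ∀ V, P V → V ≤ Y) :
    Nat.card {V : Submodule R Y // P (V.map Y.subtype)} = Nat.card {V // P V} :=
  Nat.card_congr
    { toFun V := ⟨_, V.2⟩
      invFun V := ⟨V.1.comap Y.subtype, by
        rw [map_comap_subtype, inf_eq_right.2 (hP _ V.2)]; exact V.2⟩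
      left_inv V := Subtype.ext (comap_map_eq_of_injective Y.injective_subtype _)
      right_inv V := Subtype.ext (by
        simp only [map_comap_subtype, inf_eq_right.2 (hP _ V.2)]) }

theorem card_subtype_comap_mkQ (W : Submodule R M) {P : Submodule R M → Prop}
    (hP : ∀ V, P V → W ≤ V) :
    Nat.card {V : Submodule R (M ⧸ W) // P (V.comap W.mkQ)} = Nat.card {V // P V} :=
  Nat.card_congr
    { toFun V := ⟨_, V.2⟩
      invFun V := ⟨V.1.map W.mkQ, by rw [comap_map_mkQ, sup_eq_right.2 (hP _ V.2)]; exact V.2⟩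
      left_inv V := Subtype.ext (map_comap_eq_of_surjective W.mkQ_surjective _)
      right_inv V := Subtype.ext (by
        simp only [comap_map_mkQ, sup_eq_right.2 (hP _ V.2)]) }

theorem isCompl_comap_subtype_iff {U A : Submodule R M} (hAU : A ≤ U) (V : Submodule R U) :
    IsCompl (A.comap U.subtype) V ↔ A ⊓ V.map U.subtype = ⊥ ∧ A ⊔ V.map U.subtype = U := by
  have hA : (A.comap U.subtype).map U.subtype = A := by
    rw [map_comap_subtype, inf_eq_right.2 hAU]
  rw [isCompl_iff, disjoint_iff, codisjoint_iff,
    ← (map_injective_of_injective U.injective_subtype).eq_iff,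
    ← (map_injective_of_injective U.injective_subtype).eq_iff, map_inf _ U.injective_subtype,
    Submodule.map_sup, hA, Submodule.map_bot, Submodule.map_top, range_subtype]

end Submodule

theorem Submodule.finrank_comap_mkQ {K V : Type*} [DivisionRing K] [AddCommGroup V] [Module K V]
    [FiniteDimensional K V] (W : Submodule K V) (U : Submodule K (V ⧸ W)) :
    finrank K (U.comap W.mkQ) = finrank K U + finrank K W := by
  have h := LinearMap.finrank_range_add_finrank_ker (W.mkQ.domRestrict (U.comap W.mkQ))
  rw [LinearMap.range_domRestrict, map_comap_eq_of_surjective W.mkQ_surjective,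
    LinearMap.ker_domRestrict, ker_mkQ,
    (comapSubtypeEquivOfLe (W.le_comap_mkQ U)).finrank_eq] at h
  exact h.symm

theorem Submodule.finrank_sup_of_inf_eq_bot {K V : Type*} [DivisionRing K] [AddCommGroup V]
    [Module K V] [FiniteDimensional K V] {A B : Submodule K V} (h : A ⊓ B = ⊥) :
    finrank K ↥(A ⊔ B) = finrank K A + finrank K B := by
  have := finrank_sup_add_finrank_inf_eq A B
  rwa [h, finrank_bot, add_zero] at this

section Counting

variable {F X : Type*} [Field F] [Fintype F] [AddCommGroup X] [Module F X] [Finite X]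

theorem card_linearIndependent_span_eq (W : Submodule F X) {d : ℕ} (hW : finrank F W = d) :
    Nat.card {f : Fin d → X // LinearIndependent F f ∧ span F (Set.range f) = W}
      = ∏ i : Fin d, (Fintype.card F ^ d - Fintype.card F ^ (i : ℕ)) := by
  have hli := card_linearIndependent (K := F) (V := W) hW.ge
  rw [hW] at hli
  rw [← hli]
  exact Nat.card_congr
    { toFun f := ⟨fun i => ⟨f.1 i, f.2.2.le (subset_span (Set.mem_range_self i))⟩,
        .of_comp W.subtype f.2.1⟩
      invFun g := ⟨W.subtype ∘ g.1, g.2.map' _ W.ker_subtype, by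
        rw [Set.range_comp, span_image, g.2.span_eq_top_of_card_eq_finrank'
          (by rw [Fintype.card_fin, hW]), Submodule.map_top, range_subtype]⟩
      left_inv _ := rfl
      right_inv _ := rfl }

theorem card_finrank_eq (d : ℕ) :
    (Nat.card {W : Submodule F X // finrank F W = d} : ℚ)
      = gaussBinom (Fintype.card F) (finrank F X) d := by
  set q := Fintype.card F
  have hq : 1 < q := Fintype.one_lt_card
  rcases le_or_gt d (finrank F X) with hd | hd
  · have hcount := Nat.card_subtype_eq_mul_of_card_fiber (R := ℕ)
      (P := fun f : Fin d → X => LinearIndependent F f) (fun f => span F (Set.range f))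
      (fun f hf => by rw [finrank_span_eq_card hf, Fintype.card_fin])
      fun W hW => card_linearIndependent_span_eq W hW
    rw [Nat.cast_id, Nat.cast_id, card_linearIndependent hd] at hcount
    have hcast : ∀ n, d ≤ n → ((∏ i : Fin d, (q ^ n - q ^ (i : ℕ)) : ℕ) : ℚ)
        = ∏ i ∈ range d, ((q : ℚ) ^ n - (q : ℚ) ^ i) := fun n hn => by
      rw [Nat.cast_prod, Fin.prod_univ_eq_prod_range (fun i => ((q ^ n - q ^ i : ℕ) : ℚ))]
      refine prod_congr rfl fun i hi => ?_
      rw [Nat.cast_sub (Nat.pow_le_pow_right hq.le (by simp at hi; omega))]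
      push_cast; rfl
    have hpos : (0 : ℚ) < ∏ i ∈ range d, ((q : ℚ) ^ d - (q : ℚ) ^ i) :=
      prod_pos fun i hi => sub_pos.2 (pow_lt_pow_right₀ (by exact_mod_cast hq) (mem_range.1 hi))
    rw [gaussBinom.eq_prod_div_prod (by positivity) hd, eq_div_iff hpos.ne', ← hcast d le_rfl,
      ← hcast _ hd, ← Nat.cast_mul, ← hcount]
  · have : IsEmpty {W : Submodule F X // finrank F W = d} :=
      ⟨fun W => hd.not_ge (W.2 ▸ W.1.finrank_le)⟩
    rw [Nat.card_of_isEmpty, Nat.cast_zero, gaussBinom.of_lt (by exact_mod_cast hd)]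

theorem card_isCompl (K : Submodule F X) :
    Nat.card {V // IsCompl K V} = Fintype.card F ^ (finrank F K * (finrank F X - finrank F K)) := by
  obtain ⟨C, hC⟩ := K.exists_isCompl
  have hprojections : {f : X →ₗ[F] K // ∀ x : K, f x = x} ≃ (C →ₗ[F] K) :=
    { toFun f := f.1 ∘ₗ C.subtype
      invFun g := ⟨LinearMap.ofIsCompl hC LinearMap.id g, by simp⟩
      left_inv f := Subtype.ext (LinearMap.ofIsCompl_eq hC (fun u => (f.2 u).symm) fun _ => rfl)
      right_inv g := by ext; simp }
  rw [Nat.card_congr (K.isComplEquivProj.trans hprojections), natCard_eq_pow_finrank (K := F),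
    Nat.card_eq_fintype_card, finrank_linearMap, mul_comm,
    ← K.finrank_add_eq_of_isCompl hC, Nat.add_sub_cancel_left]

theorem card_inf_eq_bot_sup_eq {A U : Submodule F X} (hAU : A ≤ U) :
    Nat.card {V : Submodule F X // A ⊓ V = ⊥ ∧ A ⊔ V = U}
      = Fintype.card F ^ (finrank F A * (finrank F U - finrank F A)) := by
  rw [← card_subtype_map_subtype U fun V (h : A ⊓ V = ⊥ ∧ A ⊔ V = U) => h.2 ▸ le_sup_right,
    Nat.card_congr (Equiv.subtypeEquivRight fun V => (isCompl_comap_subtype_iff hAU V).symm),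
    card_isCompl, (comapSubtypeEquivOfLe hAU).finrank_eq]

theorem card_disjoint (A : Submodule F X) (d : ℕ) :
    (Nat.card {V : Submodule F X // finrank F V = d ∧ A ⊓ V = ⊥} : ℚ)
      = (Fintype.card F : ℚ) ^ (finrank F A * d)
        * gaussBinom (Fintype.card F) (finrank F X - finrank F A : ℕ) d := by
  have : Finite (X ⧸ A) := Finite.of_surjective _ A.mkQ_surjective
  have hfiber : ∀ U : Submodule F X, A ≤ U ∧ finrank F U = finrank F A + d →
      (Nat.card {V : Submodule F X // (finrank F V = d ∧ A ⊓ V = ⊥) ∧ A ⊔ V = U} : ℚ)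
        = (Fintype.card F : ℚ) ^ (finrank F A * d) := by
    rintro U ⟨hAU, hU⟩
    have hcond : ∀ V : Submodule F X,
        (finrank F V = d ∧ A ⊓ V = ⊥) ∧ A ⊔ V = U ↔ A ⊓ V = ⊥ ∧ A ⊔ V = U := fun V =>
      ⟨fun h => ⟨h.1.2, h.2⟩, fun h => ⟨⟨by
        have := finrank_sup_of_inf_eq_bot h.1
        rw [h.2, hU] at this
        omega, h.1⟩, h.2⟩⟩
    rw [Nat.card_congr (Equiv.subtypeEquivRight hcond), card_inf_eq_bot_sup_eq hAU, hU,
      Nat.add_sub_cancel_left]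
    push_cast; rfl
  have hbase : Nat.card {U : Submodule F X // A ≤ U ∧ finrank F U = finrank F A + d}
      = Nat.card {U : Submodule F (X ⧸ A) // finrank F U = d} := by
    rw [← card_subtype_comap_mkQ A fun U h => h.1]
    exact Nat.card_congr (Equiv.subtypeEquivRight fun U => by
      rw [finrank_comap_mkQ, and_iff_right (A.le_comap_mkQ U)]; omega)
  rw [Nat.card_subtype_eq_mul_of_card_fiber (fun V => A ⊔ V)
      (fun V hV => ⟨le_sup_left, by rw [finrank_sup_of_inf_eq_bot hV.2, hV.1]⟩) hfiber,
    hbase, card_finrank_eq, ← A.finrank_quotient_add_finrank, Nat.add_sub_cancel, mul_comm]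

theorem card_inf_eq (E W : Submodule F X) (hWE : W ≤ E) {δ : ℕ} (hWδ : finrank F W ≤ δ) :
    (Nat.card {V : Submodule F X // finrank F V = δ ∧ E ⊓ V = W} : ℚ)
      = (Fintype.card F : ℚ) ^ ((finrank F E - finrank F W) * (δ - finrank F W))
        * gaussBinom (Fintype.card F) (finrank F X - finrank F E : ℕ) (δ - finrank F W : ℕ) := by
  have : Finite (X ⧸ W) := Finite.of_surjective _ W.mkQ_surjective
  set A := E.map W.mkQ
  have hA : A.comap W.mkQ = E := by rw [comap_map_mkQ, sup_eq_right.2 hWE]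
  have hfinrankA : finrank F A = finrank F E - finrank F W := by
    have := finrank_comap_mkQ W A; rw [hA] at this; omega
  have hcodim : finrank F (X ⧸ W) - (finrank F E - finrank F W) = finrank F X - finrank F E := by
    have := W.finrank_quotient_add_finrank
    have := finrank_mono hWE
    omega
  have hquotient : ∀ V : Submodule F (X ⧸ W),
      finrank F (V.comap W.mkQ) = δ ∧ E ⊓ V.comap W.mkQ = W
        ↔ finrank F V = δ - finrank F W ∧ A ⊓ V = ⊥ := by
    intro V
    rw [finrank_comap_mkQ, ← hA, ← comap_inf,
      (comap_injective_of_surjective W.mkQ_surjective).eq_iff' (by rw [comap_bot, ker_mkQ])]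
    exact and_congr_left fun _ => by omega
  rw [← card_subtype_comap_mkQ W fun V (h : finrank F V = δ ∧ E ⊓ V = W) => h.2 ▸ inf_le_right,
    Nat.card_congr (Equiv.subtypeEquivRight hquotient), card_disjoint, hfinrankA, hcodim]

theorem card_finrank_inf_eq (E : Submodule F X) {i δ : ℕ} (hiδ : i ≤ δ) :
    (Nat.card {V : Submodule F X // finrank F V = δ ∧ finrank F ↥(E ⊓ V) = i} : ℚ)
      = gaussBinom (Fintype.card F) (finrank F E) i
        * (Fintype.card F : ℚ) ^ ((finrank F E - i) * (δ - i))
        * gaussBinom (Fintype.card F) (finrank F X - finrank F E : ℕ) (δ - i : ℕ) := by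
  have hfiber : ∀ W : Submodule F X, W ≤ E ∧ finrank F W = i →
      (Nat.card {V : Submodule F X // (finrank F V = δ ∧ finrank F ↥(E ⊓ V) = i) ∧ E ⊓ V = W} : ℚ)
        = (Fintype.card F : ℚ) ^ ((finrank F E - i) * (δ - i))
          * gaussBinom (Fintype.card F) (finrank F X - finrank F E : ℕ) (δ - i : ℕ) := by
    rintro W ⟨hWE, hW⟩
    have hcond : ∀ V : Submodule F X, (finrank F V = δ ∧ finrank F ↥(E ⊓ V) = i) ∧ E ⊓ V = W
        ↔ finrank F V = δ ∧ E ⊓ V = W :=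
      fun V => ⟨fun h => ⟨h.1.1, h.2⟩, fun h => ⟨⟨h.1, h.2 ▸ hW⟩, h.2⟩⟩
    rw [Nat.card_congr (Equiv.subtypeEquivRight hcond), card_inf_eq E W hWE (hW ▸ hiδ), hW]
  have hbase : Nat.card {W : Submodule F X // W ≤ E ∧ finrank F W = i}
      = Nat.card {W : Submodule F E // finrank F W = i} := by
    rw [← card_subtype_map_subtype E fun W h => h.1]
    exact Nat.card_congr (Equiv.subtypeEquivRight fun W => by
      rw [finrank_map_subtype_eq, and_iff_right (map_subtype_le E W)])
  rw [Nat.card_subtype_eq_mul_of_card_fiber (fun V => E ⊓ V) (fun V hV => ⟨inf_le_left, hV.2⟩)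
    hfiber, hbase, card_finrank_eq, mul_assoc]

theorem card_intCast_le_finrank_inf (E : Submodule F X) (t : ℤ) (δ : ℕ) :
    (Nat.card {V : Submodule F X // finrank F V = δ ∧ t ≤ (finrank F ↥(E ⊓ V) : ℤ)} : ℚ)
      = ∑ i ∈ Icc t.toNat (min δ (finrank F E)), gaussBinom (Fintype.card F) (finrank F E) i
          * (Fintype.card F : ℚ) ^ ((finrank F E - i) * (δ - i))
          * gaussBinom (Fintype.card F) (finrank F X - finrank F E : ℕ) (δ - i : ℕ) := by
  rw [Nat.card_subtype_eq_sum_card_fiber (fun V => finrank F ↥(E ⊓ V)) _ fun V hV =>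
    mem_Icc.2 ⟨Int.toNat_le.2 hV.2,
      le_min (hV.1 ▸ finrank_mono inf_le_right) (finrank_mono inf_le_left)⟩, Nat.cast_sum]
  refine sum_congr rfl fun i hi => ?_
  have hi := mem_Icc.1 hi
  rw [← card_finrank_inf_eq E (hi.2.trans (min_le_left _ _))]
  exact congrArg _ (Nat.card_congr (Equiv.subtypeEquivRight fun V =>
    ⟨fun h => ⟨h.1.1, h.2⟩, fun h => ⟨⟨h.1, h.2 ▸ Int.toNat_le.1 hi.1⟩, h.2⟩⟩))

end Counting

theorem sum_div_gaussBinom_le {q : ℕ} (hq : 2 ≤ q) {n e δ t : ℕ} (he : e ≤ n) (hδ : δ ≤ n)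
    (ht : 1 ≤ t) {M : ℝ} (hM : M ≤ n - e - δ + t) :
    (((∑ i ∈ Icc t (min δ e), gaussBinom q e i * (q : ℚ) ^ ((e - i) * (δ - i))
        * gaussBinom q (n - e : ℕ) (δ - i : ℕ)) / gaussBinom q n δ : ℚ) : ℝ)
      ≤ 16 * n * (q : ℝ) ^ (-(t * M)) := by
  have hqℚ : (2 : ℚ) ≤ q := by exact_mod_cast hq
  have hqℝ : (1 : ℝ) < q := by exact_mod_cast hq
  have hG : 0 < gaussBinom q n δ := gaussBinom.pos (by linarith) hδ
  have hterm : ∀ i ∈ Icc t (min δ e),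
      ((gaussBinom q e i * (q : ℚ) ^ ((e - i) * (δ - i)) * gaussBinom q (n - e : ℕ) (δ - i : ℕ)
        / gaussBinom q n δ : ℚ) : ℝ) ≤ 16 * (q : ℝ) ^ (-(t * M)) := by
    intro i hi
    obtain ⟨hti, hiδ, hie⟩ : t ≤ i ∧ i ≤ δ ∧ i ≤ e := by
      simp only [mem_Icc, le_min_iff] at hi; exact ⟨hi.1, hi.2⟩
    rcases lt_or_ge (n - e) (δ - i) with hcodim | hcodim
    · rw [gaussBinom.of_lt (a := (n - e : ℕ)) (b := (δ - i : ℕ)) (by exact_mod_cast hcodim),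
        mul_zero, zero_div, Rat.cast_zero]
      positivity
    set r := n - e - (δ - i)
    have hexp : t * M ≤ (i * r : ℕ) := by
      have hr : (r : ℝ) = n - e - δ + i := by
        simp only [r]; push_cast [Nat.cast_sub hcodim, Nat.cast_sub he, Nat.cast_sub hiδ]; ring
      have hti' : (t : ℝ) ≤ i := by exact_mod_cast hti
      -- `i r - t M = (i - t) r + t (r - M)`
      push_cast
      nlinarith [mul_nonneg (sub_nonneg.2 hti') (r.cast_nonneg : (0 : ℝ) ≤ r)]
    have hℚ : gaussBinom q e i * (q : ℚ) ^ ((e - i) * (δ - i))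
        * gaussBinom q (n - e : ℕ) (δ - i : ℕ) / gaussBinom q n δ ≤ 16 / (q : ℚ) ^ (i * r) := by
      rw [div_le_div_iff₀ hG (by positivity)]
      linarith [gaussBinom.mul_pow_mul_gaussBinom_mul_pow_le hqℚ hie hiδ hcodim he]
    calc _ ≤ ((16 / (q : ℚ) ^ (i * r) : ℚ) : ℝ) := Rat.cast_le.2 hℚ
      _ = 16 * (q : ℝ) ^ (-((i * r : ℕ) : ℝ)) := by
        rw [Real.rpow_neg (by positivity), Real.rpow_natCast]; push_cast; ring
      _ ≤ 16 * (q : ℝ) ^ (-(t * M)) := by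
        gcongr
        exact hqℝ.le
  rw [sum_div, Rat.cast_sum]
  calc _ ≤ ∑ _i ∈ Icc t (min δ e), 16 * (q : ℝ) ^ (-(t * M)) := sum_le_sum hterm
    _ = #(Icc t (min δ e)) * (16 * (q : ℝ) ^ (-(t * M))) := by rw [sum_const, nsmul_eq_mul]
    _ ≤ n * (16 * (q : ℝ) ^ (-(t * M))) := by
        gcongr
        rw [Nat.card_Icc]
        omega
    _ = 16 * n * (q : ℝ) ^ (-(t * M)) := by ring

theorem sum_Icc_toNat_eq_sum_Icc_intCast {q : ℚ} {t : ℤ} (ht : 0 ≤ t) {m e δ : ℕ} (he : e ≤ m) :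
    ∑ i ∈ Icc t.toNat (min δ e), gaussBinom q e i * q ^ ((e - i) * (δ - i))
        * gaussBinom q (m - e : ℕ) (δ - i : ℕ)
      = ∑ i ∈ Icc t ((min δ e : ℕ) : ℤ), gaussBinom q ((m : ℤ) - e) ((δ : ℤ) - i)
          * gaussBinom q e i * q ^ (((e : ℤ) - i) * ((δ : ℤ) - i)) := by
  rw [Finset.sum_Icc_intCast_eq_sum_Icc_toNat ht]
  refine sum_congr rfl fun i hi => ?_
  obtain ⟨hiδ, hie⟩ := le_min_iff.1 (mem_Icc.1 hi).2
  rw [show ((e : ℤ) - i) * ((δ : ℤ) - i) = ((e - i) * (δ - i) : ℕ) by push_cast [hie, hiδ]; ring,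
    zpow_natCast, Nat.cast_sub he, Nat.cast_sub hiδ]
  ring

theorem stmt6_general (q n k δ j : ℕ) (F : Type) [Field F] [Fintype F]
    (hcard : Fintype.card F = q)
    (hδ : δ ≤ n) (hbig : (n : ℤ) - k < 2 * j + δ)
    (E : Submodule F (Fin n → F)) (hE : Module.finrank F E = j) :
    ((Nat.card {V : Submodule F (Fin n → F) //
        Module.finrank F V = δ ∧
          ⌈(j : ℚ) - ((n : ℚ) - k) / 2 + (δ : ℚ) / 2⌉ ≤ (Module.finrank F ↥(E ⊓ V) : ℤ)} : ℚ)
        / gaussBinom q n δ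
      = (∑ i ∈ Finset.Icc (⌈(j : ℚ) - ((n : ℚ) - k) / 2 + (δ : ℚ) / 2⌉) ((min δ j : ℕ) : ℤ),
          gaussBinom q ((n : ℤ) - j) ((δ : ℤ) - i) * gaussBinom q j i
            * (q : ℚ) ^ (((j : ℤ) - i) * ((δ : ℤ) - i))) / gaussBinom q n δ)
    ∧ ((Nat.card {V : Submodule F (Fin n → F) //
        Module.finrank F V = δ ∧
          ⌈(j : ℚ) - ((n : ℚ) - k) / 2 + (δ : ℚ) / 2⌉ ≤ (Module.finrank F ↥(E ⊓ V) : ℤ)} : ℝ)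
        / ((gaussBinom q n δ : ℚ) : ℝ)
      ≤ 16 * n * (q : ℝ) ^ (-((⌈(δ : ℚ) / 2 + j - ((n : ℚ) - k) / 2⌉ : ℝ)
          * (((n : ℝ) + k) / 2 - (⌈(δ : ℚ) / 2⌉ : ℝ))))) := by
  have hq : 2 ≤ q := hcard ▸ Fintype.one_lt_card
  have hj : j ≤ n := hE ▸ (E.finrank_le.trans_eq (finrank_fin_fun F))
  set t := ⌈(j : ℚ) - ((n : ℚ) - k) / 2 + (δ : ℚ) / 2⌉
  have ht : 1 ≤ t := Int.one_le_ceil_iff.2 (by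
    have : ((n : ℚ) - k) < 2 * j + δ := by exact_mod_cast hbig
    linarith)
  have hcount := card_intCast_le_finrank_inf E t δ
  rw [hE, finrank_fin_fun, hcard] at hcount
  refine ⟨by rw [hcount, sum_Icc_toNat_eq_sum_Icc_intCast (by omega) hj], ?_⟩
  have htoNat : ((t.toNat : ℕ) : ℝ) = t := by exact_mod_cast Int.toNat_of_nonneg (by omega)
  have hM : ((n : ℝ) + k) / 2 - (⌈(δ : ℚ) / 2⌉ : ℝ) ≤ n - j - δ + (t.toNat : ℕ) := by
    have hδ₂ := (Rat.cast_le (K := ℝ)).2 (Int.le_ceil ((δ : ℚ) / 2))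
    have ht₂ := (Rat.cast_le (K := ℝ)).2 (Int.le_ceil ((j : ℚ) - ((n : ℚ) - k) / 2 + (δ : ℚ) / 2))
    push_cast at hδ₂ ht₂
    rw [htoNat]
    linarith
  have hbound := sum_div_gaussBinom_le hq hj hδ (by omega) hM
  rw [htoNat, ← hcount, Rat.cast_div, Rat.cast_natCast] at hbound
  rwa [show (δ : ℚ) / 2 + j - ((n : ℚ) - k) / 2 = (j : ℚ) - ((n : ℚ) - k) / 2 + (δ : ℚ) / 2 by
    ring]

/-- For a fixed `j`-dimensional subspace `E` of `F_q^n` and a uniformly random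
`δ`-dimensional subspace `V` (with `2j + δ > n − k`), the probability that
`dim(E ∩ V) ≥ ⌈j − (n−k)/2 + δ/2⌉` equals
`(Σ_{i=⌈j−(n−k)/2+δ/2⌉}^{min{δ,j}} [n−j, δ−i]_q [j, i]_q q^{(j−i)(δ−i)}) / [n, δ]_q`
and is at most `16 n q^{−⌈δ/2 + j − (n−k)/2⌉((n+k)/2 − ⌈δ/2⌉)}`. -/
theorem stmt6 (q n k δ j : ℕ) (hq : 2 ≤ q) (F : Type) [Field F] [Fintype F]
    (hcard : Fintype.card F = q)
    (hk : k ≤ n) (hj : j ≤ n) (hδ : δ ≤ n) (hbig : (n : ℤ) - k < 2 * j + δ)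
    (E : Submodule F (Fin n → F)) (hE : Module.finrank F E = j) :
    ((Nat.card {V : Submodule F (Fin n → F) //
        Module.finrank F V = δ ∧
          ⌈(j : ℚ) - ((n : ℚ) - k) / 2 + (δ : ℚ) / 2⌉ ≤ (Module.finrank F ↥(E ⊓ V) : ℤ)} : ℚ)
        / gaussBinom q n δ
      = (∑ i ∈ Finset.Icc (⌈(j : ℚ) - ((n : ℚ) - k) / 2 + (δ : ℚ) / 2⌉) ((min δ j : ℕ) : ℤ),
          gaussBinom q ((n : ℤ) - j) ((δ : ℤ) - i) * gaussBinom q j i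
            * (q : ℚ) ^ (((j : ℤ) - i) * ((δ : ℤ) - i))) / gaussBinom q n δ)
    ∧ ((Nat.card {V : Submodule F (Fin n → F) //
        Module.finrank F V = δ ∧
          ⌈(j : ℚ) - ((n : ℚ) - k) / 2 + (δ : ℚ) / 2⌉ ≤ (Module.finrank F ↥(E ⊓ V) : ℤ)} : ℝ)
        / ((gaussBinom q n δ : ℚ) : ℝ)
      ≤ 16 * n * (q : ℝ) ^ (-((⌈(δ : ℚ) / 2 + j - ((n : ℚ) - k) / 2⌉ : ℝ)
          * (((n : ℝ) + k) / 2 - (⌈(δ : ℚ) / 2⌉ : ℝ))))) :=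
  stmt6_general q n k δ j F hcard hδ hbig E hE
end

section
/- Let q ≥ 2 be an integer and let m, n, j be integers with 0 ≤ j ≤ min{m, n}. Then ∏_{i=0}^{j−1} (q^m − q^i)(q^n − q^i)/(q^j − q^i) ≤ 4 · q^{j(n+m) − j^2}. Consequently, for any integer k, q^{m(k−n)} · ∏_{i=0}^{j−1} (q^m − q^i)(q^n − q^i)/(q^j − q^i) ≤ 4 · q^{m(k−n) + j(n+m) − j^2}. -/
/-!
Since `q ≥ 2`, each denominator satisfies `q^j - q^i ≥ q^j (1 - 2^{-(j-i)})` while each numerator is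
at most `q^{m+n}`, so the product is at most `q^{j(m+n-j)} / ∏_{t=1}^{j} (1 - 2^{-t})`. The partial
products `∏_{t=1}^{j} (1 - 2^{-t})` stay above `1/4 + 2^{-(j+1)}`, which bounds the denominator by `4`.
-/

open Finset

variable {K : Type*} [Field K] [LinearOrder K] [IsStrictOrderedRing K]

theorem quarter_add_half_pow_le_prod_one_sub_half_pow (j : ℕ) :
    (1 / 4 : K) + (1 / 2) ^ (j + 1) ≤ ∏ t ∈ range j, (1 - (1 / 2 : K) ^ (t + 1)) := by
  induction j with
  | zero => norm_num
  | succ j ih =>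
    rw [prod_range_succ]
    rcases Nat.eq_zero_or_pos j with rfl | hj
    · norm_num
    set x : K := (1 / 2) ^ (j + 1)
    have hx_pos : 0 < x := by positivity
    have hx_le : x ≤ 1 / 4 := by
      calc x ≤ (1 / 2 : K) ^ 2 := pow_le_pow_of_le_one (by norm_num) (by norm_num) (by omega)
        _ = 1 / 4 := by norm_num
    have hx_succ : (1 / 2 : K) ^ (j + 1 + 1) = x * (1 / 2) := pow_succ _ _
    rw [hx_succ]
    nlinarith [mul_le_mul_of_nonneg_right ih (by linarith : (0 : K) ≤ 1 - x)]

theorem inv_prod_one_sub_half_pow_le_four (j : ℕ) :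
    (∏ i ∈ range j, (1 - (1 / 2 : K) ^ (j - i)))⁻¹ ≤ 4 := by
  have hreflect : ∏ i ∈ range j, (1 - (1 / 2 : K) ^ (j - i))
      = ∏ t ∈ range j, (1 - (1 / 2 : K) ^ (t + 1)) := by
    rw [← prod_range_reflect (fun t ↦ 1 - (1 / 2 : K) ^ (t + 1)) j]
    refine prod_congr rfl fun i hi ↦ ?_
    have := mem_range.mp hi
    congr 2
    omega
  have hquarter : (1 / 4 : K) ≤ ∏ i ∈ range j, (1 - (1 / 2 : K) ^ (j - i)) := by
    rw [hreflect]
    linarith [quarter_add_half_pow_le_prod_one_sub_half_pow (K := K) j,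
      (by positivity : (0 : K) < (1 / 2) ^ (j + 1))]
  rw [inv_le_comm₀ (by linarith) (by norm_num)]
  linarith

theorem mul_one_sub_half_pow_le_pow_sub_pow {q : K} (hq : 2 ≤ q) {i j : ℕ} (hij : i ≤ j) :
    q ^ j * (1 - (1 / 2) ^ (j - i)) ≤ q ^ j - q ^ i := by
  have hsplit : q ^ j = q ^ i * q ^ (j - i) := by rw [← pow_add, Nat.add_sub_cancel' hij]
  have : q ^ i * 2 ^ (j - i) ≤ q ^ j := by
    rw [hsplit]
    gcongr
  have : q ^ i ≤ q ^ j * (1 / 2) ^ (j - i) := by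
    rw [one_div, inv_pow, ← div_eq_mul_inv, le_div_iff₀ (by positivity)]
    exact this
  linarith

theorem pow_sub_pow_mul_div_le {q : K} (hq : 2 ≤ q) {m n i j : ℕ} (hij : i < j) (hjm : j ≤ m)
    (hjn : j ≤ n) :
    (q ^ m - q ^ i) * (q ^ n - q ^ i) / (q ^ j - q ^ i)
      ≤ q ^ (m + n - j) * (1 - (1 / 2 : K) ^ (j - i))⁻¹ := by
  have hq1 : 1 ≤ q := by linarith
  have hhalf : (1 / 2 : K) ^ (j - i) < 1 := pow_lt_one₀ (by norm_num) (by norm_num) (by omega)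
  have hnum : (q ^ m - q ^ i) * (q ^ n - q ^ i) ≤ q ^ j * q ^ (m + n - j) := by
    rw [← pow_add, Nat.add_sub_cancel' (by omega), pow_add]
    have : q ^ i ≤ q ^ m := pow_le_pow_right₀ hq1 (by omega)
    have : q ^ i ≤ q ^ n := pow_le_pow_right₀ hq1 (by omega)
    have : 0 < q ^ i := by positivity
    exact mul_le_mul (by linarith) (by linarith) (by linarith) (by positivity)
  calc (q ^ m - q ^ i) * (q ^ n - q ^ i) / (q ^ j - q ^ i)
      ≤ q ^ j * q ^ (m + n - j) / (q ^ j * (1 - (1 / 2) ^ (j - i))) :=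
        div_le_div₀ (by positivity) hnum (mul_pos (by positivity) (by linarith))
          (mul_one_sub_half_pow_le_pow_sub_pow hq hij.le)
    _ = q ^ (m + n - j) * (1 - (1 / 2 : K) ^ (j - i))⁻¹ := by
        rw [mul_div_mul_left _ _ (by positivity), div_eq_mul_inv]

theorem prod_pow_sub_pow_mul_div_le {q : K} (hq : 2 ≤ q) {m n j : ℕ} (hjm : j ≤ m) (hjn : j ≤ n) :
    ∏ i ∈ range j, (q ^ m - q ^ i) * (q ^ n - q ^ i) / (q ^ j - q ^ i)
      ≤ 4 * q ^ (j * (n + m) - j * j) := by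
  have hq1 : 1 ≤ q := by linarith
  have hnonneg : ∀ i ∈ range j, 0 ≤ (q ^ m - q ^ i) * (q ^ n - q ^ i) / (q ^ j - q ^ i) := by
    intro i hi
    have hij := mem_range.mp hi
    have : q ^ i ≤ q ^ m := pow_le_pow_right₀ hq1 (by omega)
    have : q ^ i ≤ q ^ n := pow_le_pow_right₀ hq1 (by omega)
    have : q ^ i ≤ q ^ j := pow_le_pow_right₀ hq1 hij.le
    exact div_nonneg (mul_nonneg (by linarith) (by linarith)) (by linarith)
  have hexp : (m + n - j) * j = j * (n + m) - j * j := by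
    rw [Nat.sub_mul, add_comm m n, mul_comm, mul_comm j j]
  calc ∏ i ∈ range j, (q ^ m - q ^ i) * (q ^ n - q ^ i) / (q ^ j - q ^ i)
      ≤ ∏ i ∈ range j, q ^ (m + n - j) * (1 - (1 / 2 : K) ^ (j - i))⁻¹ :=
        prod_le_prod hnonneg fun i hi ↦ pow_sub_pow_mul_div_le hq (mem_range.mp hi) hjm hjn
    _ = (q ^ (m + n - j)) ^ j * (∏ i ∈ range j, (1 - (1 / 2 : K) ^ (j - i)))⁻¹ := by
        rw [prod_mul_distrib, prod_const, prod_inv_distrib, card_range]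
    _ ≤ (q ^ (m + n - j)) ^ j * 4 := by
        gcongr
        exact inv_prod_one_sub_half_pow_le_four j
    _ = 4 * q ^ (j * (n + m) - j * j) := by rw [← pow_mul, hexp, mul_comm]

/-- For `q ≥ 2` and `0 ≤ j ≤ min{m, n}`:
`∏_{i=0}^{j−1} (q^m − q^i)(q^n − q^i)/(q^j − q^i) ≤ 4 q^{j(n+m) − j²}`, and consequently,
for any integer `k`,
`q^{m(k−n)} ∏_{i=0}^{j−1} (q^m − q^i)(q^n − q^i)/(q^j − q^i) ≤ 4 q^{m(k−n) + j(n+m) − j²}`. -/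
theorem stmt9 (q m n j : ℕ) (hq : 2 ≤ q) (hj : j ≤ min m n) :
    (∏ i ∈ Finset.range j,
        ((q : ℚ) ^ m - (q : ℚ) ^ i) * ((q : ℚ) ^ n - (q : ℚ) ^ i)
          / ((q : ℚ) ^ j - (q : ℚ) ^ i))
      ≤ 4 * (q : ℚ) ^ (j * (n + m) - j * j)
    ∧ ∀ k : ℤ,
      (q : ℚ) ^ ((m : ℤ) * (k - n)) * (∏ i ∈ Finset.range j,
          ((q : ℚ) ^ m - (q : ℚ) ^ i) * ((q : ℚ) ^ n - (q : ℚ) ^ i)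
            / ((q : ℚ) ^ j - (q : ℚ) ^ i))
        ≤ 4 * (q : ℚ) ^ ((m : ℤ) * (k - n) + j * (n + m) - j * j) := by
  have hq' : (2 : ℚ) ≤ q := by exact_mod_cast hq
  have key := prod_pow_sub_pow_mul_div_le hq' (le_min_iff.mp hj).1 (le_min_iff.mp hj).2
  refine ⟨key, fun k ↦ ?_⟩
  have hjj : j * j ≤ j * (n + m) := Nat.mul_le_mul_left j (by omega)
  have hexp : (m : ℤ) * (k - n) + j * (n + m) - j * j
      = (m : ℤ) * (k - n) + ((j * (n + m) - j * j : ℕ) : ℤ) := by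
    push_cast [hjj]
    ring
  rw [hexp, zpow_add₀ (by positivity), zpow_natCast, mul_left_comm]
  exact mul_le_mul_of_nonneg_left key (by positivity)
end
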